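/- arXiv:1707.03703 — 3 statements merged into one kernel-verified Lean document; each statement's English description precedes it below -/
import Mathlib

section
/- For a monomial a = θ^{i_1} θ^{i_2} ⋯ θ^{i_p} with i_1 > i_2 > ⋯ > i_p ≥ 0, the element ∂a equals θ^{i_1+1} θ^{i_2} ⋯ θ^{i_p} plus a linear combination of standard monomials that are strictly smaller than θ^{i_1+1} θ^{i_2} ⋯ θ^{i_p} in the lexicographic order on index sequences. -/
/-- The generators `θ^i` of the exterior algebra over `ℝ` on countably many generators. -/
noncomputable def θg (i : ℕ) : ExteriorAlgebra ℝ (ℕ →₀ ℝ) :=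
  ExteriorAlgebra.ι ℝ (Finsupp.single i 1)

/-- The monomial `θ^{i₁} ⋯ θ^{i_p}` associated to a list of indices. -/
noncomputable def mon (l : List ℕ) : ExteriorAlgebra ℝ (ℕ →₀ ℝ) :=
  (l.map θg).prod

lemma mon_cons (a : ℕ) (l : List ℕ) : mon (a :: l) = θg a * mon l := by
  simp [mon]

lemma theta_sq (i : ℕ) : θg i * θg i = 0 := ExteriorAlgebra.ι_sq_zero _

lemma lex_irrefl {l : List ℕ} (h : List.Lex (· < ·) l l) : False :=
  List.lex_irrefl (fun x => Nat.lt_irrefl x) _ h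

/-- for a standard monomial `a = θ^{i₁}⋯θ^{i_p}` (with `i₁ > ⋯ > i_p ≥ 0`),
`∂a` equals `θ^{i₁+1} θ^{i₂} ⋯ θ^{i_p}` plus a linear combination of standard monomials
strictly smaller than `θ^{i₁+1} θ^{i₂} ⋯ θ^{i_p}` in the lexicographic order. -/
theorem stmt1 (D : Module.End ℝ (ExteriorAlgebra ℝ (ℕ →₀ ℝ)))
    (hder : ∀ a b, D (a * b) = D a * b + a * D b)
    (hθ : ∀ i, D (θg i) = θg (i + 1))
    (i : ℕ) (rest : List ℕ) (hsorted : (i :: rest).Pairwise (· > ·)) :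
    ∃ (s : Finset (List ℕ)) (c : List ℕ → ℝ),
      (∀ l ∈ s, l.length = rest.length + 1 ∧ l.Pairwise (· > ·) ∧
        List.Lex (· < ·) l ((i + 1) :: rest)) ∧
      D (mon (i :: rest)) = mon ((i + 1) :: rest) + ∑ l ∈ s, c l • mon l := by
  induction rest generalizing i with
  | nil =>
    refine ⟨∅, fun _ => 0, by simp, ?_⟩
    simp [mon, hθ]
  | cons j rest' IH =>
    have hij : j < i := (List.pairwise_cons.mp hsorted).1 j (by simp)
    have htail : (j :: rest').Pairwise (· > ·) := hsorted.of_cons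
    obtain ⟨s', c', hprop, heq⟩ := IH j htail
    have hnotmem : (j + 1) :: rest' ∉ s' := by
      intro h
      exact lex_irrefl (hprop _ h).2.2
    set T : Finset (List ℕ) := insert ((j + 1) :: rest') s' with hT
    set c₀ : List ℕ → ℝ := fun l => if l = (j + 1) :: rest' then 1 else c' l with hc₀
    have hTprop : ∀ l ∈ T, l.length = rest'.length + 1 ∧ l.Pairwise (· > ·) ∧
        ∀ a ∈ l.head?, a ≤ j + 1 := by
      intro l hl
      rcases Finset.mem_insert.mp hl with rfl | hl
      · refine ⟨rfl, ?_, by simp⟩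
        rw [List.pairwise_cons] at htail ⊢
        exact ⟨fun b hb => Nat.lt_succ_of_lt (htail.1 b hb), htail.2⟩
      · obtain ⟨hlen, hsort, hlex⟩ := hprop l hl
        refine ⟨hlen, hsort, ?_⟩
        intro a ha
        cases l with
        | nil => simp at ha
        | cons b l'' =>
          simp only [List.head?_cons, Option.mem_def, Option.some.injEq] at ha
          subst ha
          cases hlex with
          | cons _ => exact le_refl _
          | rel h => exact le_of_lt h
    have hsum : D (mon (j :: rest')) = ∑ l ∈ T, c₀ l • mon l := by
      rw [hT, Finset.sum_insert hnotmem, heq]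
      simp only [hc₀, if_pos rfl, one_smul]
      congr 1
      refine Finset.sum_congr rfl fun l hl => ?_
      rw [if_neg]
      intro h; exact hnotmem (h ▸ hl)
    have hmul : ∀ l ∈ T, θg i * mon l =
        if (i :: l).Pairwise (· > ·) then mon (i :: l) else 0 := by
      intro l hl
      obtain ⟨hlen, hsort, hhead⟩ := hTprop l hl
      cases l with
      | nil => simp at hlen
      | cons a l'' =>
        have ha : a ≤ j + 1 := hhead a (by simp)
        by_cases hs : (i :: a :: l'').Pairwise (· > ·)
        · rw [if_pos hs]; simp [mon_cons]
        · rw [if_neg hs]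
          have hna : ¬ (i > a) := by
            intro hgt
            apply hs
            rw [List.pairwise_cons]
            refine ⟨fun b hb => ?_, hsort⟩
            rcases List.mem_cons.mp hb with rfl | hb
            · exact hgt
            · exact lt_trans ((List.pairwise_cons.mp hsort).1 b hb) hgt
          have hai : a = i := le_antisymm (by omega) (by omega)
          subst hai
          rw [mon_cons, ← mul_assoc, theta_sq, zero_mul]
    classical
    refine ⟨(T.filter (fun l => (i :: l).Pairwise (· > ·))).image (i :: ·),
      fun m => c₀ m.tail, ?_, ?_⟩
    · intro m hm
      obtain ⟨l, hl, rfl⟩ := Finset.mem_image.mp hm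
      obtain ⟨hlT, hls⟩ := Finset.mem_filter.mp hl
      obtain ⟨hlen, _, _⟩ := hTprop l hlT
      exact ⟨by simp [hlen], hls, List.Lex.rel (Nat.lt_succ_self i)⟩
    · rw [mon_cons, hder, hθ, ← mon_cons, hsum, Finset.mul_sum]
      congr 1
      rw [Finset.sum_image (fun x _ y _ h => (List.cons_eq_cons.mp h).2)]
      rw [Finset.sum_filter]
      refine Finset.sum_congr rfl fun l hl => ?_
      rw [mul_smul_comm, hmul l hl]
      simp only [List.tail_cons]
      by_cases hs : (i :: l).Pairwise (· > ·)
      · rw [if_pos hs, if_pos hs]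
      · rw [if_neg hs, if_neg hs, smul_zero]
end

section
/- For k ≥ 2, the dimension of Θ^3_{2k−1} / ∂(Θ^3_{2k−2}) equals ⌊(k−2)/3⌋ + 1, with basis given by the classes of θ^{k−l} θ^{k−l−1} θ^{2l} for l = 0, …, ⌊(k−2)/3⌋; and for k ≥ 3, the dimension of Θ^3_{2k} / ∂(Θ^3_{2k−1}) equals ⌊(k−3)/3⌋ + 1, with basis given by the classes of θ^{k−l} θ^{k−l−1} θ^{2l+1} for l = 0, …, ⌊(k−3)/3⌋. -/
/-- `Θ^p_d`: the span of the standard monomials with `p` factors and total weight `d`. -/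
noncomputable def ThSpace (p d : ℕ) : Submodule ℝ (ExteriorAlgebra ℝ (ℕ →₀ ℝ)) :=
  Submodule.span ℝ
    {x | ∃ l : List ℕ, l.length = p ∧ l.Pairwise (· > ·) ∧ l.sum = d ∧ x = mon l}


/-! ### Auxiliary: coordinate functionals on the exterior algebra -/

noncomputable def phiAlt (a b c : ℕ) : ((ℕ →₀ ℝ) [⋀^Fin 3]→ₗ[ℝ] ℝ) :=
  (Matrix.detRowAlternating (R := ℝ) (n := Fin 3)).compLinearMap
    (LinearMap.pi fun j : Fin 3 => Finsupp.lapply (![a, b, c] j))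

noncomputable def phi (a b c : ℕ) : ExteriorAlgebra ℝ (ℕ →₀ ℝ) →ₗ[ℝ] ℝ :=
  ExteriorAlgebra.liftAlternating fun i =>
    match i with
    | 3 => phiAlt a b c
    | _ => 0

lemma mon_eq_iMulti (x y z : ℕ) :
    mon [x, y, z] = ExteriorAlgebra.ιMulti ℝ 3
      ![Finsupp.single x 1, Finsupp.single y 1, Finsupp.single z 1] := by
  rw [ExteriorAlgebra.ιMulti_apply]
  simp [mon, θg, List.ofFn_succ]

lemma phi_mon (a b c x y z : ℕ) :
    phi a b c (mon [x, y, z]) =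
      Matrix.det (Matrix.of fun i j : Fin 3 =>
        (Finsupp.single (![x, y, z] i) (1:ℝ)) (![a, b, c] j)) := by
  rw [mon_eq_iMulti, phi, ExteriorAlgebra.liftAlternating_apply_ιMulti]
  rfl

lemma phi_mon_self (a b c : ℕ) (h1 : b < a) (h2 : c < b) :
    phi a b c (mon [a, b, c]) = 1 := by
  rw [phi_mon]
  have : (Matrix.of fun i j : Fin 3 =>
      (Finsupp.single (![a, b, c] i) (1:ℝ)) (![a, b, c] j)) = 1 := by
    ext i j
    fin_cases i <;> fin_cases j <;>
      simp [Finsupp.single_apply, Matrix.one_apply, h1.ne', h2.ne', (h2.trans h1).ne', h1.ne, h2.ne, (h2.trans h1).ne] <;> omega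
  rw [this, Matrix.det_one]

lemma phi_mon_ne (a b c x y z : ℕ) (h1 : b < a) (h2 : c < b) (h3 : y < x) (h4 : z < y)
    (hne : ¬(x = a ∧ y = b ∧ z = c)) :
    phi a b c (mon [x, y, z]) = 0 := by
  rw [phi_mon]
  have key : ∃ i : Fin 3, ∀ j : Fin 3, ![x, y, z] i ≠ ![a, b, c] j := by
    by_contra hcon
    push_neg at hcon
    obtain ⟨j0, hj0⟩ := hcon 0
    obtain ⟨j1, hj1⟩ := hcon 1
    obtain ⟨j2, hj2⟩ := hcon 2
    fin_cases j0 <;> fin_cases j1 <;> fin_cases j2 <;> simp_all <;> omega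
  obtain ⟨i, hi⟩ := key
  apply Matrix.det_eq_zero_of_row_eq_zero i
  intro j
  simp [Finsupp.single_apply, hi j]

lemma phi_mon_degen (a b c x y z : ℕ) (h : a = b ∨ b = c) :
    phi a b c (mon [x, y, z]) = 0 := by
  rw [phi_mon]
  rcases h with h | h
  · apply Matrix.det_zero_of_column_eq (show (0 : Fin 3) ≠ 1 by decide)
    intro k; simp [h]
  · apply Matrix.det_zero_of_column_eq (show (1 : Fin 3) ≠ 2 by decide)
    intro k; simp [h]

lemma mon_triple (x y z : ℕ) : mon [x, y, z] = θg x * (θg y * θg z) := by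
  simp [mon]

lemma mon_zero_left (x z : ℕ) : mon [x, x, z] = 0 := by
  rw [mon_triple, ← mul_assoc, θg, ExteriorAlgebra.ι_sq_zero, zero_mul]

lemma mon_zero_right (x y : ℕ) : mon [x, y, y] = 0 := by
  rw [mon_triple]
  have : θg y * θg y = 0 := ExteriorAlgebra.ι_sq_zero _
  rw [this, mul_zero]

lemma phi_mon_delta (a b c x y z : ℕ) (h1 : b ≤ a) (h2 : c ≤ b) (h3 : y ≤ x) (h4 : z ≤ y) :
    phi a b c (mon [x, y, z]) = if x = a ∧ y = b ∧ z = c ∧ y < x ∧ z < y then 1 else 0 := by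
  by_cases hxy : x = y
  · subst hxy; rw [mon_zero_left, map_zero, if_neg (by omega)]
  by_cases hyz : y = z
  · subst hyz; rw [mon_zero_right, map_zero, if_neg (by omega)]
  by_cases hab : a = b
  · rw [phi_mon_degen _ _ _ _ _ _ (Or.inl hab), if_neg (by omega)]
  by_cases hbc : b = c
  · rw [phi_mon_degen _ _ _ _ _ _ (Or.inr hbc), if_neg (by omega)]
  by_cases heq : x = a ∧ y = b ∧ z = c
  · obtain ⟨rfl, rfl, rfl⟩ := heq
    rw [phi_mon_self _ _ _ (by omega) (by omega), if_pos (by omega)]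
  · rw [phi_mon_ne _ _ _ _ _ _ (by omega) (by omega) (by omega) (by omega) heq,
      if_neg (by omega)]

/-! ### Basic facts about `ThSpace 3 d` -/

lemma gen_elim {d : ℕ} {x : ExteriorAlgebra ℝ (ℕ →₀ ℝ)}
    (h : x ∈ {x | ∃ l : List ℕ, l.length = 3 ∧ l.Pairwise (· > ·) ∧ l.sum = d ∧ x = mon l}) :
    ∃ a b c : ℕ, b < a ∧ c < b ∧ a + b + c = d ∧ x = mon [a, b, c] := by
  obtain ⟨l, hlen, hsort, hsum, rfl⟩ := h
  obtain ⟨a, b, c, rfl⟩ : ∃ a b c, l = [a, b, c] := by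
    match l, hlen with
    | [a, b, c], _ => exact ⟨a, b, c, rfl⟩
  simp only [List.pairwise_cons, List.Pairwise.nil, List.mem_cons, List.mem_singleton,
    List.not_mem_nil] at hsort
  refine ⟨a, b, c, ?_, ?_, ?_, rfl⟩
  · have := hsort.1 b; simp at this; omega
  · have := hsort.2.1 c; simp at this; omega
  · simp only [List.sum_cons, List.sum_nil, add_zero] at hsum; omega

lemma mon_mem (x y z d : ℕ) (h1 : y < x) (h2 : z < y) (h3 : x + y + z = d) :
    mon [x, y, z] ∈ ThSpace 3 d := by
  apply Submodule.subset_span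
  exact ⟨[x, y, z], rfl, by simp [List.Pairwise, h1, h2]; omega, by simp; omega, rfl⟩

/-- The finite set of sorted triples of weight `d`. -/
def Tfin (d : ℕ) : Finset (ℕ × ℕ × ℕ) :=
  (Finset.range (d + 1) ×ˢ Finset.range (d + 1) ×ˢ Finset.range (d + 1)).filter
    (fun t => t.2.1 < t.1 ∧ t.2.2 < t.2.1 ∧ t.1 + t.2.1 + t.2.2 = d)

lemma mem_Tfin {d : ℕ} {t : ℕ × ℕ × ℕ} :
    t ∈ Tfin d ↔ t.2.1 < t.1 ∧ t.2.2 < t.2.1 ∧ t.1 + t.2.1 + t.2.2 = d := by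
  simp only [Tfin, Finset.mem_filter, Finset.mem_product, Finset.mem_range]
  constructor
  · tauto
  · intro h; exact ⟨⟨by omega, by omega, by omega⟩, h⟩

lemma repr3 {d : ℕ} {bb : ExteriorAlgebra ℝ (ℕ →₀ ℝ)} (hbb : bb ∈ ThSpace 3 d) :
    bb = ∑ t ∈ Tfin d, phi t.1 t.2.1 t.2.2 bb • mon [t.1, t.2.1, t.2.2] := by
  induction hbb using Submodule.span_induction with
  | mem x h =>
    obtain ⟨a, b, c, hab, hbc, hsum, rfl⟩ := gen_elim h
    rw [Finset.sum_eq_single (a, b, c)]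
    · rw [phi_mon_self _ _ _ hab hbc, one_smul]
    · intro t ht hne
      rw [mem_Tfin] at ht
      rw [phi_mon_ne _ _ _ _ _ _ ht.1 ht.2.1 hab hbc (by
        intro ⟨h1, h2, h3⟩
        exact hne (by rw [Prod.ext_iff, Prod.ext_iff]; exact ⟨h1.symm, h2.symm, h3.symm⟩)),
        zero_smul]
    · intro hni
      exact absurd (mem_Tfin.2 ⟨hab, hbc, hsum⟩) hni
  | zero => simp
  | add x y hx hy ihx ihy =>
    rw [Finset.sum_congr rfl (fun t _ => by rw [map_add, add_smul])]
    rw [Finset.sum_add_distrib, ← ihx, ← ihy]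
  | smul r x hx ih =>
    rw [Finset.sum_congr rfl (fun t _ => by rw [map_smul, smul_eq_mul, mul_smul])]
    rw [← Finset.smul_sum, ← ih]

/-! ### The derivation on monomials -/

lemma D_mon3 {D : Module.End ℝ (ExteriorAlgebra ℝ (ℕ →₀ ℝ))}
    (hder : ∀ a b, D (a * b) = D a * b + a * D b) (hθ : ∀ i, D (θg i) = θg (i + 1))
    (x y z : ℕ) :
    D (mon [x, y, z]) = mon [x + 1, y, z] + mon [x, y + 1, z] + mon [x, y, z + 1] := by
  rw [mon_triple, hder, hder, hθ, hθ, hθ, mon_triple, mon_triple, mon_triple,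
    mul_add, ← add_assoc]

lemma D_maps {D : Module.End ℝ (ExteriorAlgebra ℝ (ℕ →₀ ℝ))}
    (hder : ∀ a b, D (a * b) = D a * b + a * D b) (hθ : ∀ i, D (θg i) = θg (i + 1))
    (m : ℕ) : Submodule.map D (ThSpace 3 m) ≤ ThSpace 3 (m + 1) := by
  rw [ThSpace, Submodule.map_span, Submodule.span_le]
  rintro _ ⟨x, hx, rfl⟩
  obtain ⟨a, b, c, hab, hbc, hsum, rfl⟩ := gen_elim hx
  rw [D_mon3 hder hθ]
  apply Submodule.add_mem
  apply Submodule.add_mem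
  · exact mon_mem _ _ _ _ (by omega) hbc (by omega)
  · rcases eq_or_lt_of_le (Nat.succ_le_of_lt hab) with h | h
    · rw [← h, mon_zero_left]; exact Submodule.zero_mem _
    · exact mon_mem _ _ _ _ h (by omega) (by omega)
  · rcases eq_or_lt_of_le (Nat.succ_le_of_lt hbc) with h | h
    · rw [← h, mon_zero_right]; exact Submodule.zero_mem _
    · exact mon_mem _ _ _ _ hab h (by omega)

/-! ### The key triangularity computations -/

set_option maxHeartbeats 1600000 in
lemma transpose {D : Module.End ℝ (ExteriorAlgebra ℝ (ℕ →₀ ℝ))}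
    (hder : ∀ a b, D (a * b) = D a * b + a * D b)
    (hθ : ∀ i, D (θg i) = θg (i + 1))
    {m : ℕ} {bb : ExteriorAlgebra ℝ (ℕ →₀ ℝ)} (hbb : bb ∈ ThSpace 3 m)
    (p q r : ℕ) (hpq : q < p) (hqr : r < q) :
    phi p q r (D bb) =
      (if q < p - 1 then phi (p - 1) q r bb else 0)
      + (if r < q - 1 then phi p (q - 1) r bb else 0)
      + (if 0 < r then phi p q (r - 1) bb else 0) := by
  induction hbb using Submodule.span_induction with
  | mem x h =>
    obtain ⟨a, b, c, hab, hbc, hs, rfl⟩ := gen_elim h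
    rw [D_mon3 hder hθ, map_add, map_add]
    rw [phi_mon_delta p q r (a+1) b c (by omega) (by omega) (by omega) (by omega),
      phi_mon_delta p q r a (b+1) c (by omega) (by omega) (by omega) (by omega),
      phi_mon_delta p q r a b (c+1) (by omega) (by omega) (by omega) (by omega),
      phi_mon_delta (p-1) q r a b c (by omega) (by omega) (by omega) (by omega),
      phi_mon_delta p (q-1) r a b c (by omega) (by omega) (by omega) (by omega),
      phi_mon_delta p q (r-1) a b c (by omega) (by omega) (by omega) (by omega)]
    split_ifs <;> first | rfl | (exfalso; omega)
  | zero => simp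
  | add x y hx hy ihx ihy =>
    rw [map_add, map_add, ihx, ihy]
    simp only [map_add]
    split_ifs <;> ring
  | smul t x hx ih =>
    rw [map_smul, map_smul, ih]
    simp only [map_smul, smul_eq_mul]
    split_ifs <;> ring

lemma coords_vanish {D : Module.End ℝ (ExteriorAlgebra ℝ (ℕ →₀ ℝ))}
    (hder : ∀ a b, D (a * b) = D a * b + a * D b)
    (hθ : ∀ i, D (θg i) = θg (i + 1))
    {m : ℕ} {bb : ExteriorAlgebra ℝ (ℕ →₀ ℝ)} (hbb : bb ∈ ThSpace 3 m)
    (h : ∀ p q r, q < p → r < q → p + q + r = m + 1 → q + 2 ≤ p → phi p q r (D bb) = 0) :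
    ∀ a b c, b < a → c < b → a + b + c = m → phi a b c bb = 0 := by
  have key : ∀ n a b c, m ≤ a + n → b < a → c < b → a + b + c = m → phi a b c bb = 0 := by
    intro n
    induction n with
    | zero => intro a b c h1 h2 h3 h4; omega
    | succ n ih =>
      intro a b c h1 h2 h3 h4
      have ht := transpose hder hθ hbb (a + 1) b c (by omega) h3
      rw [h (a+1) b c (by omega) h3 (by omega) (by omega)] at ht
      rw [if_pos (by omega : b < a + 1 - 1)] at ht
      simp only [show a + 1 - 1 = a by omega] at ht
      have h2' : (if c < b - 1 then phi (a+1) (b-1) c bb else 0) = 0 := by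
        split_ifs with hg
        · exact ih (a+1) (b-1) c (by omega) (by omega) hg (by omega)
        · rfl
      have h3' : (if 0 < c then phi (a+1) b (c-1) bb else 0) = 0 := by
        split_ifs with hg
        · exact ih (a+1) b (c-1) (by omega) (by omega) (by omega) (by omega)
        · rfl
      rw [h2', h3'] at ht
      linarith
  intro a b c h1 h2 h3
  exact key m a b c (by omega) h1 h2 h3

lemma bb_eq_zero {D : Module.End ℝ (ExteriorAlgebra ℝ (ℕ →₀ ℝ))}
    (hder : ∀ a b, D (a * b) = D a * b + a * D b)
    (hθ : ∀ i, D (θg i) = θg (i + 1))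
    {m : ℕ} {bb : ExteriorAlgebra ℝ (ℕ →₀ ℝ)} (hbb : bb ∈ ThSpace 3 m)
    (h : ∀ p q r, q < p → r < q → p + q + r = m + 1 → q + 2 ≤ p → phi p q r (D bb) = 0) :
    bb = 0 := by
  have hc := coords_vanish hder hθ hbb h
  rw [repr3 hbb]
  apply Finset.sum_eq_zero
  intro t ht
  rw [mem_Tfin] at ht
  rw [hc t.1 t.2.1 t.2.2 ht.1 ht.2.1 ht.2.2, zero_smul]

/-! ### The master lemmas, for a general weight `d` with gap-one monomials
enumerated by `np` on `Finset.range N` -/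

lemma part_c {D : Module.End ℝ (ExteriorAlgebra ℝ (ℕ →₀ ℝ))}
    (hder : ∀ a b, D (a * b) = D a * b + a * D b)
    (hθ : ∀ i, D (θg i) = θg (i + 1))
    (d N : ℕ) (np : ℕ → ℕ × ℕ × ℕ)
    (hd : 1 ≤ d)
    (hnp1 : ∀ l, l < N → (np l).1 = (np l).2.1 + 1 ∧ (np l).2.2 < (np l).2.1 ∧
      (np l).1 + (np l).2.1 + (np l).2.2 = d)
    (hnp3 : ∀ l l', l < N → l' < N → np l = np l' → l = l') :
    ∀ c : ℕ → ℝ,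
    (∃ bb ∈ ThSpace 3 (d - 1),
      (∑ l ∈ Finset.range N, c l • mon [(np l).1, (np l).2.1, (np l).2.2]) = D bb) →
    ∀ l ∈ Finset.range N, c l = 0 := by
  intro c ⟨bb, hbb, heq⟩ l hl
  rw [Finset.mem_range] at hl
  have hz : bb = 0 := by
    apply bb_eq_zero hder hθ hbb
    intro p q r hpq hqr hs hgap
    rw [← heq, map_sum]
    apply Finset.sum_eq_zero
    intro l' hl'
    rw [Finset.mem_range] at hl'
    obtain ⟨e1, e2, e3⟩ := hnp1 l' hl'
    rw [map_smul, phi_mon_delta p q r _ _ _ (by omega) (by omega) (by omega) (by omega),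
      if_neg (by omega), smul_zero]
  rw [hz, map_zero] at heq
  obtain ⟨e1, e2, e3⟩ := hnp1 l hl
  have key := congrArg (phi (np l).1 (np l).2.1 (np l).2.2) heq
  rw [map_sum, map_zero] at key
  rw [Finset.sum_eq_single l] at key
  · rw [map_smul, phi_mon_delta _ _ _ _ _ _ (by omega) (by omega) (by omega) (by omega),
      if_pos (by omega), smul_eq_mul, mul_one] at key
    exact key
  · intro l' hl'1 hl'2
    rw [Finset.mem_range] at hl'1
    obtain ⟨f1, f2, f3⟩ := hnp1 l' hl'1
    rw [map_smul, phi_mon_delta _ _ _ _ _ _ (by omega) (by omega) (by omega) (by omega),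
      if_neg ?_, smul_zero]
    intro ⟨g1, g2, g3, _, _⟩
    exact hl'2 (hnp3 l' l hl'1 hl (by
      apply Prod.ext
      · exact g1
      · exact Prod.ext g2 g3))
  · intro hni; exact absurd (Finset.mem_range.2 hl) hni

lemma part_b_mon {D : Module.End ℝ (ExteriorAlgebra ℝ (ℕ →₀ ℝ))}
    (hder : ∀ a b, D (a * b) = D a * b + a * D b)
    (hθ : ∀ i, D (θg i) = θg (i + 1))
    (d N : ℕ) (np : ℕ → ℕ × ℕ × ℕ)
    (hnp2 : ∀ b c : ℕ, c < b → (b + 1) + b + c = d → ∃ l, l < N ∧ np l = (b + 1, b, c)) :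
    ∀ a b c : ℕ, b < a → c < b → a + b + c = d →
    ∃ (co : ℕ → ℝ) (bb : ExteriorAlgebra ℝ (ℕ →₀ ℝ)), bb ∈ ThSpace 3 (d - 1) ∧
      mon [a, b, c] =
        (∑ l ∈ Finset.range N, co l • mon [(np l).1, (np l).2.1, (np l).2.2]) + D bb := by
  intro a
  induction a using Nat.strong_induction_on with
  | _ a ih =>
    intro b c hab hbc hsum
    by_cases hstep : a = b + 1
    · subst hstep
      obtain ⟨l0, hl0N, hl0⟩ := hnp2 b c hbc hsum
      refine ⟨fun l => if l = l0 then 1 else 0, 0, Submodule.zero_mem _, ?_⟩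
      rw [map_zero, add_zero]
      have hco : (∑ l ∈ Finset.range N,
          (if l = l0 then (1:ℝ) else 0) • mon [(np l).1, (np l).2.1, (np l).2.2])
          = ∑ l ∈ Finset.range N,
            if l = l0 then mon [(np l).1, (np l).2.1, (np l).2.2] else 0 :=
        Finset.sum_congr rfl (fun l _ => by rw [ite_smul, one_smul, zero_smul])
      rw [hco, Finset.sum_ite_eq' (Finset.range N) l0
        (fun l => mon [(np l).1, (np l).2.1, (np l).2.2]),
        if_pos (Finset.mem_range.2 hl0N), hl0]
    · obtain ⟨a', rfl⟩ : ∃ a', a = a' + 1 := ⟨a - 1, by omega⟩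
      have hX : ∃ (co : ℕ → ℝ) (bb : ExteriorAlgebra ℝ (ℕ →₀ ℝ)), bb ∈ ThSpace 3 (d - 1) ∧
          mon [a', b + 1, c] =
            (∑ l ∈ Finset.range N, co l • mon [(np l).1, (np l).2.1, (np l).2.2]) + D bb := by
        by_cases h : b + 1 = a'
        · refine ⟨0, 0, Submodule.zero_mem _, ?_⟩
          rw [← h, mon_zero_left, map_zero, add_zero]
          simp
        · exact ih a' (by omega) (b + 1) c (by omega) (by omega) (by omega)
      have hY : ∃ (co : ℕ → ℝ) (bb : ExteriorAlgebra ℝ (ℕ →₀ ℝ)), bb ∈ ThSpace 3 (d - 1) ∧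
          mon [a', b, c + 1] =
            (∑ l ∈ Finset.range N, co l • mon [(np l).1, (np l).2.1, (np l).2.2]) + D bb := by
        by_cases h : c + 1 = b
        · refine ⟨0, 0, Submodule.zero_mem _, ?_⟩
          rw [← h, mon_zero_right, map_zero, add_zero]
          simp
        · exact ih a' (by omega) b (c + 1) (by omega) (by omega) (by omega)
      obtain ⟨coX, bX, hbX, heX⟩ := hX
      obtain ⟨coY, bY, hbY, heY⟩ := hY
      have hm0 : mon [a', b, c] ∈ ThSpace 3 (d - 1) :=
        mon_mem _ _ _ _ (by omega) hbc (by omega)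
      refine ⟨fun l => -coX l - coY l, mon [a', b, c] - bX - bY,
        Submodule.sub_mem _ (Submodule.sub_mem _ hm0 hbX) hbY, ?_⟩
      have hD := D_mon3 hder hθ a' b c
      rw [map_sub, map_sub, hD]
      have hsplit : (∑ l ∈ Finset.range N,
          (-coX l - coY l) • mon [(np l).1, (np l).2.1, (np l).2.2])
          = -(∑ l ∈ Finset.range N, coX l • mon [(np l).1, (np l).2.1, (np l).2.2])
            - (∑ l ∈ Finset.range N, coY l • mon [(np l).1, (np l).2.1, (np l).2.2]) := by
        rw [← Finset.sum_neg_distrib, ← Finset.sum_sub_distrib]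
        exact Finset.sum_congr rfl (fun l _ => by rw [sub_smul, neg_smul])
      rw [hsplit, heX, heY]
      abel

lemma part_b {D : Module.End ℝ (ExteriorAlgebra ℝ (ℕ →₀ ℝ))}
    (hder : ∀ a b, D (a * b) = D a * b + a * D b)
    (hθ : ∀ i, D (θg i) = θg (i + 1))
    (d N : ℕ) (np : ℕ → ℕ × ℕ × ℕ)
    (hnp2 : ∀ b c : ℕ, c < b → (b + 1) + b + c = d → ∃ l, l < N ∧ np l = (b + 1, b, c)) :
    ∀ x ∈ ThSpace 3 d,
    ∃ (co : ℕ → ℝ) (bb : ExteriorAlgebra ℝ (ℕ →₀ ℝ)), bb ∈ ThSpace 3 (d - 1) ∧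
      x = (∑ l ∈ Finset.range N, co l • mon [(np l).1, (np l).2.1, (np l).2.2]) + D bb := by
  intro x hx
  induction hx using Submodule.span_induction with
  | mem x h =>
    obtain ⟨a, b, c, hab, hbc, hsum, rfl⟩ := gen_elim h
    exact part_b_mon hder hθ d N np hnp2 a b c hab hbc hsum
  | zero => exact ⟨0, 0, Submodule.zero_mem _, by simp⟩
  | add x y hx hy ihx ihy =>
    obtain ⟨co1, b1, hb1, he1⟩ := ihx
    obtain ⟨co2, b2, hb2, he2⟩ := ihy
    refine ⟨fun l => co1 l + co2 l, b1 + b2, Submodule.add_mem _ hb1 hb2, ?_⟩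
    have hsplit : (∑ l ∈ Finset.range N,
        (co1 l + co2 l) • mon [(np l).1, (np l).2.1, (np l).2.2])
        = (∑ l ∈ Finset.range N, co1 l • mon [(np l).1, (np l).2.1, (np l).2.2])
          + (∑ l ∈ Finset.range N, co2 l • mon [(np l).1, (np l).2.1, (np l).2.2]) := by
      rw [← Finset.sum_add_distrib]
      exact Finset.sum_congr rfl (fun l _ => add_smul _ _ _)
    rw [he1, he2, map_add, hsplit]
    abel
  | smul t x hx ihx =>
    obtain ⟨co1, b1, hb1, he1⟩ := ihx
    refine ⟨fun l => t * co1 l, t • b1, Submodule.smul_mem _ _ hb1, ?_⟩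
    have hsplit : (∑ l ∈ Finset.range N,
        (t * co1 l) • mon [(np l).1, (np l).2.1, (np l).2.2])
        = t • ∑ l ∈ Finset.range N, co1 l • mon [(np l).1, (np l).2.1, (np l).2.2] := by
      rw [Finset.smul_sum]
      exact Finset.sum_congr rfl (fun l _ => mul_smul _ _ _)
    rw [he1, map_smul, smul_add, hsplit]

lemma master {D : Module.End ℝ (ExteriorAlgebra ℝ (ℕ →₀ ℝ))}
    (hder : ∀ a b, D (a * b) = D a * b + a * D b)
    (hθ : ∀ i, D (θg i) = θg (i + 1))
    (d N : ℕ) (np : ℕ → ℕ × ℕ × ℕ)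
    (hd : 1 ≤ d)
    (hnp1 : ∀ l, l < N → (np l).1 = (np l).2.1 + 1 ∧ (np l).2.2 < (np l).2.1 ∧
      (np l).1 + (np l).2.1 + (np l).2.2 = d)
    (hnp2 : ∀ b c : ℕ, c < b → (b + 1) + b + c = d → ∃ l, l < N ∧ np l = (b + 1, b, c))
    (hnp3 : ∀ l l', l < N → l' < N → np l = np l' → l = l') :
    Module.finrank ℝ
      (ThSpace 3 d ⧸ Submodule.comap (ThSpace 3 d).subtype
        (Submodule.map D (ThSpace 3 (d - 1)))) = N := by
  set V := ThSpace 3 d with hV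
  set W := Submodule.comap (ThSpace 3 d).subtype (Submodule.map D (ThSpace 3 (d - 1))) with hW
  have hmemV : ∀ l, l < N → mon [(np l).1, (np l).2.1, (np l).2.2] ∈ V := by
    intro l hl
    obtain ⟨e1, e2, e3⟩ := hnp1 l hl
    exact mon_mem _ _ _ _ (by omega) e2 e3
  have hDV : ∀ y ∈ ThSpace 3 (d - 1), D y ∈ V := by
    intro y hy
    have := D_maps hder hθ (d - 1) (Submodule.mem_map_of_mem (f := D) hy)
    rwa [show d - 1 + 1 = d by omega] at this
  set u : Fin N → V := fun l =>
    ⟨mon [(np l).1, (np l).2.1, (np l).2.2], hmemV l l.2⟩ with hu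
  set v : Fin N → (V ⧸ W) := fun l => W.mkQ (u l) with hv
  have hucoe : ∀ (co : Fin N → ℝ),
      ((∑ i : Fin N, co i • u i : V) : ExteriorAlgebra ℝ (ℕ →₀ ℝ))
        = ∑ l ∈ Finset.range N, (fun l => if h : l < N then co ⟨l, h⟩ else 0) l •
            mon [(np l).1, (np l).2.1, (np l).2.2] := by
    intro co
    rw [Finset.sum_range fun l => (fun l => if h : l < N then co ⟨l, h⟩ else 0) l •
      mon [(np l).1, (np l).2.1, (np l).2.2]]
    rw [show ((∑ i : Fin N, co i • u i : V) : ExteriorAlgebra ℝ (ℕ →₀ ℝ))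
      = V.subtype (∑ i : Fin N, co i • u i) from rfl, map_sum]
    apply Finset.sum_congr rfl
    intro i _
    simp [hu]
  have hind : LinearIndependent ℝ v := by
    rw [Fintype.linearIndependent_iff]
    intro g hg
    have h0 : W.mkQ (∑ i : Fin N, g i • u i) = 0 := by
      rw [map_sum]
      simpa [hv] using hg
    rw [Submodule.mkQ_apply, Submodule.Quotient.mk_eq_zero, hW, Submodule.mem_comap] at h0
    obtain ⟨bb, hbb, hDbb⟩ := h0
    intro i
    have := part_c hder hθ d N np hd hnp1 hnp3 (fun l => if h : l < N then g ⟨l, h⟩ else 0)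
      ⟨bb, hbb, by rw [← hucoe g]; exact hDbb.symm⟩ i (Finset.mem_range.2 i.2)
    simpa [i.2] using this
  have hspan : ⊤ ≤ Submodule.span ℝ (Set.range v) := by
    rintro q -
    obtain ⟨x, rfl⟩ := Submodule.Quotient.mk_surjective W q
    obtain ⟨co, bb, hbb, heq⟩ := part_b hder hθ d N np hnp2 x.1 x.2
    set co' : Fin N → ℝ := fun i => co i.1 with hco'
    have hcoeq : ∀ l ∈ Finset.range N,
        (fun l => if h : l < N then co' ⟨l, h⟩ else 0) l •
            mon [(np l).1, (np l).2.1, (np l).2.2]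
          = co l • mon [(np l).1, (np l).2.1, (np l).2.2] := by
      intro l hl
      rw [Finset.mem_range] at hl
      simp [hco', hl]
    have hxsplit : x = (∑ i : Fin N, co' i • u i) + ⟨D bb, hDV bb hbb⟩ := by
      apply Subtype.ext
      rw [Submodule.coe_add, hucoe co', Finset.sum_congr rfl hcoeq]
      exact heq
    have hmk : Submodule.Quotient.mk (p := W) x = W.mkQ x := rfl
    rw [hmk, hxsplit, map_add]
    have hzero : W.mkQ (⟨D bb, hDV bb hbb⟩ : V) = 0 := by
      rw [Submodule.mkQ_apply, Submodule.Quotient.mk_eq_zero]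
      exact Submodule.mem_comap.2 (Submodule.mem_map_of_mem hbb)
    rw [hzero, add_zero, map_sum]
    apply Submodule.sum_mem
    intro i _
    rw [map_smul]
    exact Submodule.smul_mem _ _ (Submodule.subset_span ⟨i, rfl⟩)
  have B : Module.Basis (Fin N) ℝ (V ⧸ W) := Module.Basis.mk hind hspan
  rw [Module.finrank_eq_card_basis B, Fintype.card_fin]


/-- dimensions and bases of `Θ^3_{2k-1} / ∂(Θ^3_{2k-2})` (for `k ≥ 2`) and of
`Θ^3_{2k} / ∂(Θ^3_{2k-1})` (for `k ≥ 3`): the first has dimension `⌊(k-2)/3⌋ + 1` with basis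
the classes of `θ^{k-l} θ^{k-l-1} θ^{2l}`, `l = 0, …, ⌊(k-2)/3⌋`, the second has dimension
`⌊(k-3)/3⌋ + 1` with basis the classes of `θ^{k-l} θ^{k-l-1} θ^{2l+1}`, `l = 0, …, ⌊(k-3)/3⌋`. -/
theorem stmt4 (D : Module.End ℝ (ExteriorAlgebra ℝ (ℕ →₀ ℝ)))
    (hder : ∀ a b, D (a * b) = D a * b + a * D b)
    (hθ : ∀ i, D (θg i) = θg (i + 1)) :
    (∀ k : ℕ, 2 ≤ k →
      (Module.finrank ℝ
        (ThSpace 3 (2 * k - 1) ⧸ Submodule.comap (ThSpace 3 (2 * k - 1)).subtype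
          (Submodule.map D (ThSpace 3 (2 * k - 2)))) = (k - 2) / 3 + 1) ∧
      (∀ a ∈ ThSpace 3 (2 * k - 1), ∃ c : ℕ → ℝ, ∃ b ∈ ThSpace 3 (2 * k - 2),
        a = (∑ l ∈ Finset.range ((k - 2) / 3 + 1),
              c l • mon [k - l, k - l - 1, 2 * l]) + D b) ∧
      (∀ c : ℕ → ℝ,
        (∃ b ∈ ThSpace 3 (2 * k - 2),
          (∑ l ∈ Finset.range ((k - 2) / 3 + 1),
            c l • mon [k - l, k - l - 1, 2 * l]) = D b) →
        ∀ l ∈ Finset.range ((k - 2) / 3 + 1), c l = 0)) ∧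
    (∀ k : ℕ, 3 ≤ k →
      (Module.finrank ℝ
        (ThSpace 3 (2 * k) ⧸ Submodule.comap (ThSpace 3 (2 * k)).subtype
          (Submodule.map D (ThSpace 3 (2 * k - 1)))) = (k - 3) / 3 + 1) ∧
      (∀ a ∈ ThSpace 3 (2 * k), ∃ c : ℕ → ℝ, ∃ b ∈ ThSpace 3 (2 * k - 1),
        a = (∑ l ∈ Finset.range ((k - 3) / 3 + 1),
              c l • mon [k - l, k - l - 1, 2 * l + 1]) + D b) ∧
      (∀ c : ℕ → ℝ,
        (∃ b ∈ ThSpace 3 (2 * k - 1),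
          (∑ l ∈ Finset.range ((k - 3) / 3 + 1),
            c l • mon [k - l, k - l - 1, 2 * l + 1]) = D b) →
        ∀ l ∈ Finset.range ((k - 3) / 3 + 1), c l = 0)) := by
  constructor
  · intro k hk
    have hd : 1 ≤ 2 * k - 1 := by omega
    have hnp1 : ∀ l, l < (k - 2) / 3 + 1 →
        ((fun l => (k - l, k - l - 1, 2 * l)) l).1 =
          ((fun l => (k - l, k - l - 1, 2 * l)) l).2.1 + 1 ∧
        ((fun l => (k - l, k - l - 1, 2 * l)) l).2.2 <
          ((fun l => (k - l, k - l - 1, 2 * l)) l).2.1 ∧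
        ((fun l => (k - l, k - l - 1, 2 * l)) l).1 +
          ((fun l => (k - l, k - l - 1, 2 * l)) l).2.1 +
          ((fun l => (k - l, k - l - 1, 2 * l)) l).2.2 = 2 * k - 1 := by
      intro l hl
      refine ⟨by dsimp only; omega, by dsimp only; omega, by dsimp only; omega⟩
    have hnp2 : ∀ b c : ℕ, c < b → (b + 1) + b + c = 2 * k - 1 →
        ∃ l, l < (k - 2) / 3 + 1 ∧
          (fun l => (k - l, k - l - 1, 2 * l)) l = (b + 1, b, c) := by
      intro b c hbc hsum
      refine ⟨k - 1 - b, by omega, ?_⟩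
      dsimp only
      simp only [Prod.mk.injEq]
      refine ⟨by omega, by omega, by omega⟩
    have hnp3 : ∀ l l', l < (k - 2) / 3 + 1 → l' < (k - 2) / 3 + 1 →
        (fun l => (k - l, k - l - 1, 2 * l)) l = (fun l => (k - l, k - l - 1, 2 * l)) l' →
        l = l' := by
      intro l l' _ _ h
      have := congrArg (fun t : ℕ × ℕ × ℕ => t.2.2) h
      dsimp only at this
      omega
    refine ⟨?_, ?_, ?_⟩
    · rw [show 2 * k - 2 = 2 * k - 1 - 1 by omega]
      exact master hder hθ _ _ _ hd hnp1 hnp2 hnp3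
    · intro a ha
      obtain ⟨co, bb, hbb, heq⟩ := part_b hder hθ (2*k-1) ((k-2)/3+1) (fun l => (k - l, k - l - 1, 2 * l)) hnp2 a ha
      rw [show 2 * k - 1 - 1 = 2 * k - 2 by omega] at hbb
      exact ⟨co, bb, hbb, heq⟩
    · intro c hc
      apply part_c hder hθ (2*k-1) ((k-2)/3+1) (fun l => (k - l, k - l - 1, 2 * l)) hd hnp1 hnp3 c
      obtain ⟨bb, hbb, heq⟩ := hc
      rw [show 2 * k - 2 = 2 * k - 1 - 1 by omega] at hbb
      exact ⟨bb, hbb, heq⟩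
  · intro k hk
    have hd : 1 ≤ 2 * k := by omega
    have hnp1 : ∀ l, l < (k - 3) / 3 + 1 →
        ((fun l => (k - l, k - l - 1, 2 * l + 1)) l).1 =
          ((fun l => (k - l, k - l - 1, 2 * l + 1)) l).2.1 + 1 ∧
        ((fun l => (k - l, k - l - 1, 2 * l + 1)) l).2.2 <
          ((fun l => (k - l, k - l - 1, 2 * l + 1)) l).2.1 ∧
        ((fun l => (k - l, k - l - 1, 2 * l + 1)) l).1 +
          ((fun l => (k - l, k - l - 1, 2 * l + 1)) l).2.1 +
          ((fun l => (k - l, k - l - 1, 2 * l + 1)) l).2.2 = 2 * k := by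
      intro l hl
      refine ⟨by dsimp only; omega, by dsimp only; omega, by dsimp only; omega⟩
    have hnp2 : ∀ b c : ℕ, c < b → (b + 1) + b + c = 2 * k →
        ∃ l, l < (k - 3) / 3 + 1 ∧
          (fun l => (k - l, k - l - 1, 2 * l + 1)) l = (b + 1, b, c) := by
      intro b c hbc hsum
      refine ⟨k - 1 - b, by omega, ?_⟩
      dsimp only
      simp only [Prod.mk.injEq]
      refine ⟨by omega, by omega, by omega⟩
    have hnp3 : ∀ l l', l < (k - 3) / 3 + 1 → l' < (k - 3) / 3 + 1 →
        (fun l => (k - l, k - l - 1, 2 * l + 1)) l =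
          (fun l => (k - l, k - l - 1, 2 * l + 1)) l' → l = l' := by
      intro l l' _ _ h
      have := congrArg (fun t : ℕ × ℕ × ℕ => t.2.2) h
      dsimp only at this
      omega
    refine ⟨?_, ?_, ?_⟩
    · exact master hder hθ (2*k) ((k-3)/3+1) (fun l => (k - l, k - l - 1, 2 * l + 1)) hd hnp1 hnp2 hnp3
    · exact part_b hder hθ (2*k) ((k-3)/3+1) (fun l => (k - l, k - l - 1, 2 * l + 1)) hnp2
    · exact part_c hder hθ (2*k) ((k-3)/3+1) (fun l => (k - l, k - l - 1, 2 * l + 1)) hd hnp1 hnp3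
end

section
/- Let χ ∈ Θ^3_d. If (δχ/δθ)^2 lies in the image ∂(Θ^4_{2d−1}), then δχ/δθ = 0. -/
noncomputable section

abbrev EA : Type := ExteriorAlgebra ℝ (ℕ →₀ ℝ)

def ee (i : ℕ) : (ℕ →₀ ℝ) := Finsupp.single i 1

variable {A : Type} [CommRing A] [Algebra ℝ A]

/-- the `ℝ`-linear map `m ↦ ∑ i, m i • u ^ i`. -/
def colV (u : A) : (ℕ →₀ ℝ) →ₗ[ℝ] A :=
  Finsupp.lsum ℝ (fun i => LinearMap.toSpanSingleton ℝ A (u ^ i))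

@[simp] lemma colV_single (u : A) (a : ℕ) : colV u (ee a) = u ^ a := by
  simp [colV, ee, LinearMap.toSpanSingleton]

/-- rows map -/
def rowsM {n : ℕ} (us : Fin n → A) : (ℕ →₀ ℝ) →ₗ[ℝ] (Fin n → A) :=
  LinearMap.pi (fun j => colV (us j))

/-- the alternating map `(m₁, …, m_n) ↦ det (colV (us j) (m i))`. -/
def altD {n : ℕ} (us : Fin n → A) : (ℕ →₀ ℝ) [⋀^Fin n]→ₗ[ℝ] A where
  toMultilinearMap :=
    (Matrix.detRowAlternating.toMultilinearMap.restrictScalars ℝ).compLinearMap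
      (fun _ => rowsM us)
  map_eq_zero_of_eq' := by
    intro v i j hv hij
    exact Matrix.detRowAlternating.map_eq_zero_of_eq (fun k => rowsM us (v k))
      (by show rowsM us (v i) = rowsM us (v j); rw [hv]) hij

lemma altD_apply {n : ℕ} (us : Fin n → A) (v : Fin n → (ℕ →₀ ℝ)) :
    altD us v = Matrix.det (Matrix.of fun i j => colV (us j) (v i)) := rfl

/-- family of alternating maps concentrated in degree `n` -/
def famN {n : ℕ} (us : Fin n → A) : ∀ i : ℕ, (ℕ →₀ ℝ) [⋀^Fin i]→ₗ[ℝ] A :=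
  fun i => if h : i = n then (by subst h; exact altD us) else 0

@[simp] lemma famN_self {n : ℕ} (us : Fin n → A) : famN us n = altD us := by
  simp [famN]

/-- The main linear functionals on the exterior algebra. -/
def Psi {n : ℕ} (us : Fin n → A) : EA →ₗ[ℝ] A :=
  ExteriorAlgebra.liftAlternating (famN us)

lemma θg_mul (a b : ℕ) : θg a * θg b = ExteriorAlgebra.ιMulti ℝ 2 ![ee a, ee b] := by
  simp [ExteriorAlgebra.ιMulti_apply, θg, ee, List.ofFn_succ]

lemma θg_mul4 (a b c e : ℕ) :
    θg a * (θg b * (θg c * θg e)) = ExteriorAlgebra.ιMulti ℝ 4 ![ee a, ee b, ee c, ee e] := by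
  simp [ExteriorAlgebra.ιMulti_apply, θg, ee, List.ofFn_succ, mul_assoc]

lemma Psi_mul2 (us : Fin 2 → A) (a b : ℕ) :
    Psi us (θg a * θg b) = us 0 ^ a * us 1 ^ b - us 0 ^ b * us 1 ^ a := by
  rw [θg_mul, Psi, ExteriorAlgebra.liftAlternating_apply_ιMulti, famN_self, altD_apply,
    Matrix.det_fin_two]
  simp [mul_comm]

lemma Psi_mul4 (us : Fin 4 → A) (a b c e : ℕ) :
    Psi us (θg a * (θg b * (θg c * θg e))) =
      Matrix.det (Matrix.of fun i j => (us j) ^ (![a, b, c, e] i)) := by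
  rw [θg_mul4, Psi, ExteriorAlgebra.liftAlternating_apply_ιMulti, famN_self, altD_apply]
  congr 1
  ext i j
  fin_cases i <;> simp

end

noncomputable section
open MvPolynomial

abbrev P2 : Type := MvPolynomial (Fin 2) ℝ
abbrev P3 : Type := MvPolynomial (Fin 3) ℝ

def us2 : Fin 2 → P2 := ![X 0, X 1]
def W4 : P3 := - X 0 - X 1 - X 2
def us4 : Fin 4 → P3 := ![X 0, X 1, X 2, W4]

def Psi2 : EA →ₗ[ℝ] P2 := Psi us2
def Psi4 : EA →ₗ[ℝ] P3 := Psi us4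

lemma Psi2_θθ (a b : ℕ) :
    Psi2 (θg a * θg b) = X 0 ^ a * X 1 ^ b - X 0 ^ b * X 1 ^ a := by
  rw [Psi2, Psi_mul2 us2]; simp [us2]

def span2 : Submodule ℝ EA := Submodule.span ℝ {u : EA | ∃ i j, u = θg i * θg j}

lemma θθ_mem_span2 (i j : ℕ) : θg i * θg j ∈ span2 :=
  Submodule.subset_span ⟨i, j, rfl⟩

lemma anticomm (i j : ℕ) : θg j * θg i = - (θg i * θg j) := by
  have h : ExteriorAlgebra.ι ℝ (ee i + ee j) * ExteriorAlgebra.ι ℝ (ee i + ee j) = 0 :=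
    ExteriorAlgebra.ι_sq_zero _
  rw [map_add, add_mul, mul_add, mul_add] at h
  have h1 : ExteriorAlgebra.ι ℝ (ee i) * ExteriorAlgebra.ι ℝ (ee i) = 0 :=
    ExteriorAlgebra.ι_sq_zero _
  have h2 : ExteriorAlgebra.ι ℝ (ee j) * ExteriorAlgebra.ι ℝ (ee j) = 0 :=
    ExteriorAlgebra.ι_sq_zero _
  rw [h1, h2, zero_add, add_zero] at h
  simpa [θg, ee] using eq_neg_of_add_eq_zero_right h

section Dlem
variable (D : Module.End ℝ EA)

lemma D_θθ (hder : ∀ a b, D (a * b) = D a * b + a * D b)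
    (hθ : ∀ i, D (θg i) = θg (i + 1)) (i j : ℕ) : D (θg i * θg j) = θg (i+1) * θg j + θg i * θg (j+1) := by
  rw [hder, hθ, hθ]

lemma D_mem_span2 (hder : ∀ a b, D (a * b) = D a * b + a * D b)
    (hθ : ∀ i, D (θg i) = θg (i + 1)) {u : EA} (hu : u ∈ span2) : D u ∈ span2 := by
  induction hu using Submodule.span_induction with
  | mem x hx =>
      obtain ⟨i, j, rfl⟩ := hx
      rw [D_θθ D hder hθ]
      exact add_mem (θθ_mem_span2 _ _) (θθ_mem_span2 _ _)
  | zero => simp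
  | add x y _ _ hx hy => rw [map_add]; exact add_mem hx hy
  | smul c x _ hx => rw [map_smul]; exact Submodule.smul_mem _ _ hx

lemma Dpow_mem_span2 (hder : ∀ a b, D (a * b) = D a * b + a * D b)
    (hθ : ∀ i, D (θg i) = θg (i + 1)) {u : EA} (hu : u ∈ span2) (s : ℕ) : (D ^ s) u ∈ span2 := by
  induction s generalizing u with
  | zero => simpa
  | succ n ih =>
      rw [pow_succ', Module.End.mul_apply]
      exact D_mem_span2 D hder hθ (ih hu)

lemma Psi2_D (hder : ∀ a b, D (a * b) = D a * b + a * D b)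
    (hθ : ∀ i, D (θg i) = θg (i + 1)) {u : EA} (hu : u ∈ span2) : Psi2 (D u) = (X 0 + X 1) * Psi2 u := by
  induction hu using Submodule.span_induction with
  | mem x hx =>
      obtain ⟨i, j, rfl⟩ := hx
      rw [D_θθ D hder hθ, map_add, Psi2_θθ, Psi2_θθ, Psi2_θθ]
      ring
  | zero => simp
  | add x y _ _ hx hy => simp only [map_add, hx, hy, mul_add]
  | smul c x _ hx => simp only [map_smul, hx, mul_smul_comm]

lemma Psi2_Dpow (hder : ∀ a b, D (a * b) = D a * b + a * D b)
    (hθ : ∀ i, D (θg i) = θg (i + 1)) {u : EA} (hu : u ∈ span2) (s : ℕ) :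
    Psi2 ((D ^ s) u) = (X 0 + X 1) ^ s * Psi2 u := by
  induction s generalizing u with
  | zero => simp
  | succ n ih =>
      rw [pow_succ', Module.End.mul_apply]
      rw [Psi2_D D hder hθ (Dpow_mem_span2 D hder hθ hu n), ih hu]
      ring

end Dlem

/-- the linear section sending `X^pY^q` to `θ^pθ^q`. -/
def Ξ : P2 →ₗ[ℝ] EA :=
  (MvPolynomial.basisMonomials (Fin 2) ℝ).constr ℝ (fun m => θg (m 0) * θg (m 1))

lemma XY_eq_monomial (p q : ℕ) :
    (X 0 : P2) ^ p * X 1 ^ q = monomial (Finsupp.single 0 p + Finsupp.single 1 q) 1 := by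
  rw [X_pow_eq_monomial, X_pow_eq_monomial, monomial_mul, one_mul]

lemma Xi_XY (p q : ℕ) : Ξ ((X 0 : P2) ^ p * X 1 ^ q) = θg p * θg q := by
  rw [XY_eq_monomial]
  have : (monomial (Finsupp.single 0 p + Finsupp.single 1 q) (1:ℝ))
      = MvPolynomial.basisMonomials (Fin 2) ℝ (Finsupp.single 0 p + Finsupp.single 1 q) := by
    rw [coe_basisMonomials]
  rw [this, Ξ, Module.Basis.constr_basis]
  simp

lemma Xi_Psi2 {u : EA} (hu : u ∈ span2) : Ξ (Psi2 u) = (2:ℝ) • u := by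
  induction hu using Submodule.span_induction with
  | mem x hx =>
      obtain ⟨i, j, rfl⟩ := hx
      rw [Psi2_θθ, map_sub, Xi_XY, Xi_XY, anticomm j i]
      module
  | zero => simp
  | add x y _ _ hx hy => rw [map_add, map_add, hx, hy, smul_add]
  | smul c x _ hx => rw [map_smul, map_smul, hx, smul_comm]

end

noncomputable section
open MvPolynomial

/-- the polynomial `E'(a,b,c)`, image of the variational derivative of `θ^aθ^bθ^c`. -/
def Ep (a b c : ℕ) : P2 :=
  (-X 0 - X 1)^a * (X 0^b * X 1^c - X 0^c * X 1^b)
  - (-X 0 - X 1)^b * (X 0^a * X 1^c - X 0^c * X 1^a)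
  + (-X 0 - X 1)^c * (X 0^a * X 1^b - X 0^b * X 1^a)

def GoodSet (d : ℕ) : Set P2 :=
  {F | ∃ a b c : ℕ, b < a ∧ c < b ∧ a + b + c = d ∧ F = Ep a b c}

lemma sgn_smul (n : ℕ) (S : P2) :
    (-1 : ℝ)^n • ((X 0 + X 1)^n * S) = (-X 0 - X 1)^n * S := by
  have h1 : (-X 0 - X 1 : P2) = -(X 0 + X 1) := by ring
  rw [h1, smul_eq_C_mul, map_pow, map_neg, map_one, ← mul_assoc, ← mul_pow]
  ring_nf

section pdsec
variable (D : Module.End ℝ EA)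
    (pd : ℕ → Module.End ℝ EA)

lemma pd_mon3 (hpd1 : ∀ s, pd s 1 = 0)
    (hpdθ : ∀ s t x, pd s (θg t * x) = (if s = t then x else 0) - θg t * pd s x)
    (a b c s : ℕ) :
    pd s (θg a * (θg b * θg c)) =
      (if s = a then θg b * θg c else 0) - (if s = b then θg a * θg c else 0)
        + (if s = c then θg a * θg b else 0) := by
  have h3 : pd s (θg c) = if s = c then 1 else 0 := by
    conv_lhs => rw [← mul_one (θg c)]
    rw [hpdθ, hpd1, mul_zero, sub_zero]
  have h2 : pd s (θg b * θg c) = (if s = b then θg c else 0)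
      - (if s = c then θg b else 0) := by
    rw [hpdθ, h3, mul_ite, mul_one, mul_zero]
  simp only [hpdθ, h3, mul_sub, mul_ite, mul_zero, mul_one]
  abel

lemma spike_sum (M a b c : ℕ) (hab : b < a) (hbc : c < b) (hM : a < M)
    (x y z : EA) :
    ∑ s ∈ Finset.range M, ((-1:ℝ)^s) •
      ((D^s) ((if s = a then x else 0) - (if s = b then y else 0)
        + (if s = c then z else 0))) =
      ((-1:ℝ)^a) • ((D^a) x) - ((-1:ℝ)^b) • ((D^b) y) + ((-1:ℝ)^c) • ((D^c) z) := by
  have key : ∀ s ∈ Finset.range M, ((-1:ℝ)^s) •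
      ((D^s) ((if s = a then x else 0) - (if s = b then y else 0)
        + (if s = c then z else 0))) =
      (if s = a then ((-1:ℝ)^s) • ((D^s) x) else 0)
      - (if s = b then ((-1:ℝ)^s) • ((D^s) y) else 0)
      + (if s = c then ((-1:ℝ)^s) • ((D^s) z) else 0) := by
    intro s _
    split_ifs <;> simp [map_add, map_sub, smul_sub, smul_add]
  rw [Finset.sum_congr rfl key]
  rw [Finset.sum_add_distrib, Finset.sum_sub_distrib,
    Finset.sum_ite_eq' (Finset.range M) a, Finset.sum_ite_eq' (Finset.range M) b,
    Finset.sum_ite_eq' (Finset.range M) c]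
  have ha : a ∈ Finset.range M := by simp; omega
  have hb : b ∈ Finset.range M := by simp; omega
  have hc : c ∈ Finset.range M := by simp; omega
  rw [if_pos ha, if_pos hb, if_pos hc]

lemma struct (hder : ∀ a b, D (a * b) = D a * b + a * D b)
    (hθ : ∀ i, D (θg i) = θg (i + 1))
    (hpd1 : ∀ s, pd s 1 = 0)
    (hpdθ : ∀ s t x, pd s (θg t * x) = (if s = t then x else 0) - θg t * pd s x)
    (d : ℕ) (χ : EA) (hχ : χ ∈ ThSpace 3 d) :
    ∃ M₀ : ℕ, (∀ s, M₀ ≤ s → pd s χ = 0) ∧ ∃ w F, w ∈ span2 ∧ Psi2 w = F ∧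
      F ∈ Submodule.span ℝ (GoodSet d) ∧
      ∀ M, M₀ ≤ M → ∑ s ∈ Finset.range M, ((-1:ℝ)^s) • ((D^s) (pd s χ)) = w := by
  induction hχ using Submodule.span_induction with
  | mem x hx =>
      obtain ⟨l, hlen, hsort, hsum, rfl⟩ := hx
      obtain ⟨a, b, c, rfl⟩ := List.length_eq_three.mp hlen
      have hab : b < a := by
        simp [List.pairwise_cons] at hsort; omega
      have hbc : c < b := by
        simp [List.pairwise_cons] at hsort; omega
      have hd : a + b + c = d := by simp at hsum; omega
      have hmon : mon [a, b, c] = θg a * (θg b * θg c) := by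
        simp [mon, mul_assoc]
      refine ⟨a + 1, ?_, ?_⟩
      · intro s hs
        rw [hmon, pd_mon3 pd hpd1 hpdθ]
        have h1 : s ≠ a := by omega
        have h2 : s ≠ b := by omega
        have h3 : s ≠ c := by omega
        simp [h1, h2, h3]
      · refine ⟨((-1:ℝ)^a) • ((D^a) (θg b * θg c)) - ((-1:ℝ)^b) • ((D^b) (θg a * θg c))
          + ((-1:ℝ)^c) • ((D^c) (θg a * θg b)), Ep a b c, ?_, ?_, ?_, ?_⟩
        · exact add_mem (sub_mem (Submodule.smul_mem _ _
            (Dpow_mem_span2 D hder hθ (θθ_mem_span2 _ _) _))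
            (Submodule.smul_mem _ _ (Dpow_mem_span2 D hder hθ (θθ_mem_span2 _ _) _)))
            (Submodule.smul_mem _ _ (Dpow_mem_span2 D hder hθ (θθ_mem_span2 _ _) _))
        · rw [map_add, map_sub, map_smul, map_smul, map_smul,
            Psi2_Dpow D hder hθ (θθ_mem_span2 _ _), Psi2_Dpow D hder hθ (θθ_mem_span2 _ _),
            Psi2_Dpow D hder hθ (θθ_mem_span2 _ _), Psi2_θθ, Psi2_θθ, Psi2_θθ,
            sgn_smul, sgn_smul, sgn_smul, Ep]
        · exact Submodule.subset_span ⟨a, b, c, hab, hbc, hd, rfl⟩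
        · intro M hM
          rw [hmon]
          have : ∀ s, pd s (θg a * (θg b * θg c)) =
              (if s = a then θg b * θg c else 0) - (if s = b then θg a * θg c else 0)
                + (if s = c then θg a * θg b else 0) := pd_mon3 pd hpd1 hpdθ a b c
          simp only [this]
          exact spike_sum D M a b c hab hbc (by omega) _ _ _
  | zero =>
      exact ⟨0, fun s _ => by simp, 0, 0, zero_mem _, by simp, zero_mem _,
        fun M _ => by simp⟩
  | add x y hx hy ihx ihy =>
      obtain ⟨M₁, hM₁, w₁, F₁, hw₁, hPF₁, hF₁, hs₁⟩ := ihx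
      obtain ⟨M₂, hM₂, w₂, F₂, hw₂, hPF₂, hF₂, hs₂⟩ := ihy
      refine ⟨max M₁ M₂, ?_, w₁ + w₂, F₁ + F₂, add_mem hw₁ hw₂, by rw [map_add, hPF₁, hPF₂],
        add_mem hF₁ hF₂, ?_⟩
      · intro s hs
        rw [map_add, hM₁ s (le_trans (le_max_left _ _) hs),
          hM₂ s (le_trans (le_max_right _ _) hs), add_zero]
      · intro M hM
        have : ∀ s, pd s (x + y) = pd s x + pd s y := fun s => map_add _ _ _
        simp only [this, map_add, smul_add]
        rw [Finset.sum_add_distrib, hs₁ M (le_trans (le_max_left _ _) hM),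
          hs₂ M (le_trans (le_max_right _ _) hM)]
  | smul r x hx ihx =>
      obtain ⟨M₁, hM₁, w₁, F₁, hw₁, hPF₁, hF₁, hs₁⟩ := ihx
      refine ⟨M₁, ?_, r • w₁, r • F₁, Submodule.smul_mem _ _ hw₁,
        by rw [map_smul, hPF₁], Submodule.smul_mem _ _ hF₁, ?_⟩
      · intro s hs
        rw [map_smul, hM₁ s hs, smul_zero]
      · intro M hM
        have : ∀ s, pd s (r • x) = r • pd s x := fun s => map_smul _ _ _
        simp only [this, map_smul, smul_comm _ r]
        rw [← Finset.smul_sum, hs₁ M hM]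

end pdsec

end


set_option maxHeartbeats 1000000 in
lemma det_four {R : Type} [CommRing R] (A : Matrix (Fin 4) (Fin 4) R) :
    A.det =
      A 0 0 * (A 1 1 * (A 2 2 * A 3 3 - A 2 3 * A 3 2) - A 1 2 * (A 2 1 * A 3 3 - A 2 3 * A 3 1)
        + A 1 3 * (A 2 1 * A 3 2 - A 2 2 * A 3 1))
      - A 0 1 * (A 1 0 * (A 2 2 * A 3 3 - A 2 3 * A 3 2) - A 1 2 * (A 2 0 * A 3 3 - A 2 3 * A 3 0)
        + A 1 3 * (A 2 0 * A 3 2 - A 2 2 * A 3 0))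
      + A 0 2 * (A 1 0 * (A 2 1 * A 3 3 - A 2 3 * A 3 1) - A 1 1 * (A 2 0 * A 3 3 - A 2 3 * A 3 0)
        + A 1 3 * (A 2 0 * A 3 1 - A 2 1 * A 3 0))
      - A 0 3 * (A 1 0 * (A 2 1 * A 3 2 - A 2 2 * A 3 1) - A 1 1 * (A 2 0 * A 3 2 - A 2 2 * A 3 0)
        + A 1 2 * (A 2 0 * A 3 1 - A 2 1 * A 3 0)) := by
  rw [Matrix.det_succ_row_zero, Fin.sum_univ_four]
  simp [Matrix.det_fin_three, Matrix.submatrix, Fin.succAbove]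
  norm_num [show (Fin.succ 2 : Fin 4) = 3 from rfl, show ((3 : Fin 4) : ℕ) = 3 from rfl,
    show (Fin.castSucc 2 : Fin 4) = 2 from rfl, show ¬ ((2:Fin 4) < 2) from by decide,
    show ((2:Fin 4) < 3) from by decide]
  ring


noncomputable section
open MvPolynomial

section four
variable (D : Module.End ℝ EA)

lemma D_prod4 (hder : ∀ a b, D (a * b) = D a * b + a * D b)
    (hθ : ∀ i, D (θg i) = θg (i + 1)) (p q r s : ℕ) :
    D (θg p * (θg q * (θg r * θg s))) =
      θg (p+1) * (θg q * (θg r * θg s)) + θg p * (θg (q+1) * (θg r * θg s))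
      + θg p * (θg q * (θg (r+1) * θg s)) + θg p * (θg q * (θg r * θg (s+1))) := by
  simp only [hder, hθ, mul_add]
  abel

lemma Psi4_D_mon4 (hder : ∀ a b, D (a * b) = D a * b + a * D b)
    (hθ : ∀ i, D (θg i) = θg (i + 1)) (p q r s : ℕ) :
    Psi4 (D (θg p * (θg q * (θg r * θg s)))) = 0 := by
  rw [D_prod4 D hder hθ, map_add, map_add, map_add]
  rw [Psi4, Psi_mul4, Psi_mul4, Psi_mul4, Psi_mul4]
  rw [det_four, det_four, det_four, det_four]
  simp only [Matrix.of_apply, Matrix.cons_val_zero, Matrix.cons_val_one, Matrix.head_cons,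
    Matrix.cons_val_two, Matrix.tail_cons, Matrix.cons_val_three, us4, W4, pow_succ]
  ring

lemma Psi4_D_ThSpace (hder : ∀ a b, D (a * b) = D a * b + a * D b)
    (hθ : ∀ i, D (θg i) = θg (i + 1)) (n : ℕ) {u : EA} (hu : u ∈ ThSpace 4 n) :
    Psi4 (D u) = 0 := by
  induction hu using Submodule.span_induction with
  | mem x hx =>
      obtain ⟨l, hlen, -, -, rfl⟩ := hx
      match l, hlen with
      | [p, q, r, s], _ =>
        have hmon : mon [p, q, r, s] = θg p * (θg q * (θg r * θg s)) := by
          simp [mon, mul_assoc]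
        rw [hmon]
        exact Psi4_D_mon4 D hder hθ p q r s
  | zero => simp
  | add x y _ _ hx hy => rw [map_add, map_add, hx, hy, add_zero]
  | smul c x _ hx => rw [map_smul, map_smul, hx, smul_zero]

/-- the two-variable substitution algebra maps -/
def sub3 (u v : P3) : P2 →ₐ[ℝ] P3 := aeval ![u, v]
def sub2 (u v : P2) : P2 →ₐ[ℝ] P2 := aeval ![u, v]

/-- The six-term Laplace pairing. -/
def PP (f g : P2) : P3 :=
  sub3 (X 0) (X 1) f * sub3 (X 2) W4 g - sub3 (X 0) (X 2) f * sub3 (X 1) W4 g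
  + sub3 (X 0) W4 f * sub3 (X 1) (X 2) g + sub3 (X 1) (X 2) f * sub3 (X 0) W4 g
  - sub3 (X 1) W4 f * sub3 (X 0) (X 2) g + sub3 (X 2) W4 f * sub3 (X 0) (X 1) g

lemma PP_add_left (f₁ f₂ g : P2) : PP (f₁ + f₂) g = PP f₁ g + PP f₂ g := by
  simp only [PP, map_add]; ring

lemma PP_add_right (f g₁ g₂ : P2) : PP f (g₁ + g₂) = PP f g₁ + PP f g₂ := by
  simp only [PP, map_add]; ring

lemma PP_smul_left (r : ℝ) (f g : P2) : PP (r • f) g = r • PP f g := by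
  simp only [PP, map_smul, smul_mul_assoc]
  module

lemma PP_smul_right (r : ℝ) (f g : P2) : PP f (r • g) = r • PP f g := by
  simp only [PP, map_smul, mul_smul_comm]
  module

lemma PP_zero_left (g : P2) : PP 0 g = 0 := by
  simp [PP]

lemma PP_zero_right (f : P2) : PP f 0 = 0 := by
  simp [PP]

lemma Psi4_mul (u₁ u₂ : EA) (h₁ : u₁ ∈ span2) (h₂ : u₂ ∈ span2) :
    Psi4 (u₁ * u₂) = PP (Psi2 u₁) (Psi2 u₂) := by
  induction h₁ using Submodule.span_induction with
  | mem x hx =>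
      obtain ⟨a, b, rfl⟩ := hx
      induction h₂ using Submodule.span_induction with
      | mem y hy =>
          obtain ⟨p, q, rfl⟩ := hy
          have hre : θg a * θg b * (θg p * θg q) = θg a * (θg b * (θg p * θg q)) := by
            rw [mul_assoc]
          rw [hre, Psi4, Psi_mul4, det_four, Psi2_θθ, Psi2_θθ]
          simp only [Matrix.of_apply, Matrix.cons_val_zero, Matrix.cons_val_one, Matrix.head_cons,
            Matrix.cons_val_two, Matrix.tail_cons, Matrix.cons_val_three]
          simp only [PP, sub3, map_sub, map_mul, map_pow, aeval_X]
          simp only [us4, Matrix.cons_val_zero, Matrix.cons_val_one, Matrix.head_cons,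
            Matrix.cons_val_two, Matrix.tail_cons, Matrix.cons_val_three]
          ring
      | zero => simp [PP_zero_right]
      | add y z hy hz ihy ihz => rw [mul_add, map_add, ihy, ihz, map_add, PP_add_right]
      | smul r y hy ihy => rw [mul_smul_comm, map_smul, ihy, map_smul, PP_smul_right]
  | zero => simp [PP_zero_left]
  | add x y hx hy ihx ihy => rw [add_mul, map_add, ihx, ihy, map_add, PP_add_left]
  | smul r x hx ihx => rw [smul_mul_assoc, map_smul, ihx, map_smul, PP_smul_left]

end four

end

noncomputable section
open MvPolynomial

lemma fin2_degree (m : Fin 2 →₀ ℕ) : m.degree = m 0 + m 1 := by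
  rw [Finsupp.degree, ← Fin.sum_univ_two (fun i => m i)]
  exact Finset.sum_subset (Finset.subset_univ _)
    (fun x _ hx => Finsupp.notMem_support_iff.mp hx)

lemma fin2_ext_iff (a b a' b' : ℕ) :
    (Finsupp.single (0 : Fin 2) a + Finsupp.single 1 b)
      = Finsupp.single 0 a' + Finsupp.single 1 b' ↔ a = a' ∧ b = b' := by
  constructor
  · intro h
    constructor
    · have h0 := DFunLike.congr_fun h 0
      simpa [Finsupp.single_apply] using h0
    · have h1 := DFunLike.congr_fun h 1
      simpa [Finsupp.single_apply] using h1
  · rintro ⟨rfl, rfl⟩; rfl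

lemma fin2_app0 (a b : ℕ) : (Finsupp.single (0:Fin 2) a + Finsupp.single 1 b : Fin 2 →₀ ℕ) 0 = a := by
  simp [Finsupp.single_apply]

lemma fin2_app1 (a b : ℕ) : (Finsupp.single (0:Fin 2) a + Finsupp.single 1 b : Fin 2 →₀ ℕ) 1 = b := by
  simp [Finsupp.single_apply]

lemma fin2_decomp (m : Fin 2 →₀ ℕ) :
    m = Finsupp.single 0 (m 0) + Finsupp.single 1 (m 1) := by
  ext i
  fin_cases i <;> simp [Finsupp.single_apply]

/-- basic monomial -/
def MM (d a : ℕ) : P2 := X 0 ^ a * X 1 ^ (d - a)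

lemma coeff_XY (a b x y : ℕ) :
    coeff (Finsupp.single 0 x + Finsupp.single 1 y) ((X 0 : P2)^a * X 1^b)
      = if a = x ∧ b = y then 1 else 0 := by
  rw [XY_eq_monomial, coeff_monomial]
  exact if_congr (fin2_ext_iff a b x y) rfl rfl

/-- coefficients -/
def cf (d : ℕ) (F : P2) (a : ℕ) : ℝ :=
  coeff (Finsupp.single 0 a + Finsupp.single 1 (d - a)) F

lemma rep_hom {d : ℕ} {F : P2} (hF : F ∈ homogeneousSubmodule (Fin 2) ℝ d) :
    F = ∑ a ∈ Finset.range (d+1), cf d F a • MM d a := by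
  rw [mem_homogeneousSubmodule] at hF
  apply MvPolynomial.ext
  intro m
  obtain ⟨x, y, rfl⟩ : ∃ x y, m = Finsupp.single 0 x + Finsupp.single 1 y :=
    ⟨m 0, m 1, fin2_decomp m⟩
  rw [MvPolynomial.coeff_sum]
  by_cases hm : x + y = d
  · rw [Finset.sum_eq_single x]
    · rw [coeff_smul, MM, coeff_XY]
      rw [cf]
      have h1 : d - x = y := by omega
      rw [h1, if_pos ⟨rfl, rfl⟩, smul_eq_mul, mul_one]
    · intro a _ ha
      rw [coeff_smul, MM, coeff_XY, if_neg, smul_eq_mul, mul_zero]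
      rintro ⟨rfl, -⟩; exact ha rfl
    · intro hmem
      exfalso; exact hmem (Finset.mem_range.mpr (by omega))
  · rw [hF.coeff_eq_zero (by rw [fin2_degree, fin2_app0, fin2_app1]; exact hm)]
    apply (Finset.sum_eq_zero _).symm
    intro a ha
    rw [coeff_smul, MM, coeff_XY, if_neg, smul_eq_mul, mul_zero]
    rintro ⟨rfl, hb⟩
    exact hm (by simp at ha; omega)

lemma Ep_term_homog (n m k : ℕ) :
    (((-X 0 - X 1 : P2))^n * (X 0^m * X 1^k - X 0^k * X 1^m)).IsHomogeneous (n + (m + k)) := by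
  have h0 : ((-X 0 - X 1 : P2)).IsHomogeneous 1 := by
    have := ((isHomogeneous_X ℝ (0 : Fin 2)).neg.sub (isHomogeneous_X ℝ (1 : Fin 2)))
    simpa using this
  have h1 : ((-X 0 - X 1 : P2)^n).IsHomogeneous n := by simpa using h0.pow n
  have h2 : ((X 0 : P2)^m * X 1^k).IsHomogeneous (m + k) :=
    (isHomogeneous_X_pow _ _).mul (isHomogeneous_X_pow _ _)
  have h3 : ((X 0 : P2)^k * X 1^m).IsHomogeneous (m + k) := by
    have := (isHomogeneous_X_pow (R := ℝ) (0 : Fin 2) k).mul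
      (isHomogeneous_X_pow (R := ℝ) (1 : Fin 2) m)
    simpa [Nat.add_comm] using this
  exact h1.mul (h2.sub h3)

lemma Ep_homog (a b c d : ℕ) (hd : a + b + c = d) :
    Ep a b c ∈ homogeneousSubmodule (Fin 2) ℝ d := by
  rw [mem_homogeneousSubmodule, Ep]
  have t1 := Ep_term_homog a b c
  have t2 := Ep_term_homog b a c
  have t3 := Ep_term_homog c a b
  rw [show a + (b + c) = d by omega] at t1
  rw [show b + (a + c) = d by omega] at t2
  rw [show c + (a + b) = d by omega] at t3
  exact (t1.sub t2).add t3

lemma good_homog {d : ℕ} {F : P2} (hF : F ∈ Submodule.span ℝ (GoodSet d)) :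
    F ∈ homogeneousSubmodule (Fin 2) ℝ d := by
  refine Submodule.span_le.mpr ?_ hF
  rintro x ⟨a, b, c, -, -, hd, rfl⟩
  exact Ep_homog a b c d hd

/-- substitution homs on `P2` -/
def sgh : P2 →ₐ[ℝ] P2 := sub2 (X 1) (-X 0 - X 1)
def swph : P2 →ₐ[ℝ] P2 := sub2 (X 1) (X 0)

lemma sgh_X0 : sgh (X 0) = X 1 := by simp [sgh, sub2]
lemma sgh_X1 : sgh (X 1) = -X 0 - X 1 := by simp [sgh, sub2]
lemma swph_X0 : swph (X 0) = X 1 := by simp [swph, sub2]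
lemma swph_X1 : swph (X 1) = X 0 := by simp [swph, sub2]

lemma sg_good {d : ℕ} {F : P2} (hF : F ∈ Submodule.span ℝ (GoodSet d)) :
    sgh F = F := by
  have : Submodule.span ℝ (GoodSet d) ≤ LinearMap.ker (sgh.toLinearMap - LinearMap.id) := by
    rw [Submodule.span_le]
    rintro x ⟨a, b, c, -, -, -, rfl⟩
    rw [SetLike.mem_coe, LinearMap.mem_ker, LinearMap.sub_apply, LinearMap.id_apply, sub_eq_zero]
    show sgh (Ep a b c) = Ep a b c
    simp only [Ep, map_add, map_sub, map_mul, map_pow, map_neg, sgh_X0, sgh_X1]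
    ring
  have := this hF
  rw [LinearMap.mem_ker, LinearMap.sub_apply, LinearMap.id_apply, sub_eq_zero] at this
  exact this

lemma swp_good {d : ℕ} {F : P2} (hF : F ∈ Submodule.span ℝ (GoodSet d)) :
    swph F = -F := by
  have : Submodule.span ℝ (GoodSet d) ≤ LinearMap.ker (swph.toLinearMap + LinearMap.id) := by
    rw [Submodule.span_le]
    rintro x ⟨a, b, c, -, -, -, rfl⟩
    rw [SetLike.mem_coe, LinearMap.mem_ker, LinearMap.add_apply, LinearMap.id_apply,
      add_eq_zero_iff_eq_neg]
    show swph (Ep a b c) = -Ep a b c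
    simp only [Ep, map_add, map_sub, map_mul, map_pow, map_neg, swph_X0, swph_X1]
    ring
  have := this hF
  rw [LinearMap.mem_ker, LinearMap.add_apply, LinearMap.id_apply, add_eq_zero_iff_eq_neg] at this
  exact this

end

noncomputable section
open MvPolynomial

lemma sub2_comp (u v p q f : P2) :
    sub2 u v (sub2 p q f) = sub2 (sub2 u v p) (sub2 u v q) f := by
  rw [← AlgHom.comp_apply]
  have : (sub2 u v).comp (sub2 p q) = sub2 (sub2 u v p) (sub2 u v q) := by
    rw [sub2, sub2, comp_aeval]
    congr 1
    funext i
    fin_cases i <;> simp [sub2]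
  rw [this]

/-- specialization `P3 → P2`, `Z ↦ -X`. -/
def rho : P3 →ₐ[ℝ] P2 := aeval ![X 0, X 1, -X 0]

lemma rho_sub3 (u v : P3) (f : P2) : rho (sub3 u v f) = sub2 (rho u) (rho v) f := by
  rw [← AlgHom.comp_apply]
  have : rho.comp (sub3 u v) = sub2 (rho u) (rho v) := by
    rw [sub3, sub2, rho, comp_aeval]
    congr 1
    funext i
    fin_cases i <;> simp
  rw [this]

lemma rho_X0 : rho (X 0) = X 0 := by simp [rho]
lemma rho_X1 : rho (X 1) = X 1 := by simp [rho]
lemma rho_X2 : rho (X 2) = -X 0 := by simp [rho]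
lemma rho_W4 : rho W4 = -X 1 := by simp [rho, W4]; ring

/-- generic coefficient sums -/
def Fsum (d : ℕ) (α : ℕ → ℝ) : P2 := ∑ a ∈ Finset.range (d+1), α a • MM d a

lemma sub2_Fsum (u v : P2) (d : ℕ) (α : ℕ → ℝ) :
    sub2 u v (Fsum d α) = ∑ a ∈ Finset.range (d+1), α a • (u^a * v^(d-a)) := by
  rw [Fsum, map_sum]
  refine Finset.sum_congr rfl (fun a _ => ?_)
  rw [map_smul, MM, map_mul, map_pow, map_pow]
  simp [sub2]

lemma neg_one_pow_smul (n : ℕ) (T : P2) : ((-1:ℝ)^n) • T = (-1:P2)^n * T := by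
  rw [smul_eq_C_mul, map_pow, map_neg, map_one]

lemma npow_mod (m : ℕ) : (-1:ℝ)^m = (-1)^(m % 2) := by
  conv_lhs => rw [← Nat.div_add_mod m 2]
  rw [pow_add, pow_mul, neg_one_sq, one_pow, one_mul]

lemma npow_congr (m n : ℕ) (h : m % 2 = n % 2) : (-1:ℝ)^m = (-1)^n := by
  rw [npow_mod, npow_mod n, h]

lemma V1 (d : ℕ) (α : ℕ → ℝ) : sub2 (X 0) (X 1) (Fsum d α) = Fsum d α := by
  rw [sub2_Fsum, Fsum]
  exact Finset.sum_congr rfl (fun a _ => by rw [MM])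

lemma V2 (d : ℕ) (α : ℕ → ℝ) :
    sub2 (-X 0) (-X 1) (Fsum d α) = Fsum d (fun a => (-1:ℝ)^d * α a) := by
  rw [sub2_Fsum, Fsum]
  refine Finset.sum_congr rfl (fun a ha => ?_)
  rw [MM, neg_pow (X 0 : P2) a, neg_pow (X 1 : P2) (d - a), mul_mul_mul_comm, ← pow_add,
    show a + (d - a) = d by simp at ha; omega, mul_comm ((-1:ℝ)^d) (α a), mul_smul,
    neg_one_pow_smul]

lemma V4 (d : ℕ) (α : ℕ → ℝ) :
    sub2 (X 0) (-X 1) (Fsum d α) = Fsum d (fun a => (-1:ℝ)^(d-a) * α a) := by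
  rw [sub2_Fsum, Fsum]
  refine Finset.sum_congr rfl (fun a _ => ?_)
  rw [MM, neg_pow (X 1 : P2) (d - a), mul_left_comm, mul_comm ((-1:ℝ)^(d-a)) (α a), mul_smul, neg_one_pow_smul]

lemma V5 (d : ℕ) (α : ℕ → ℝ) :
    sub2 (-X 0) (X 1) (Fsum d α) = Fsum d (fun a => (-1:ℝ)^a * α a) := by
  rw [sub2_Fsum, Fsum]
  refine Finset.sum_congr rfl (fun a _ => ?_)
  rw [MM, neg_pow (X 0 : P2) a, mul_assoc, mul_comm ((-1:ℝ)^a) (α a), mul_smul, neg_one_pow_smul]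

lemma V3 (u : P2) (d : ℕ) (α : ℕ → ℝ) :
    sub2 u 0 (Fsum d α) = α d • u^d := by
  rw [sub2_Fsum, Finset.sum_eq_single d]
  · rw [Nat.sub_self, pow_zero, mul_one]
  · intro a ha hne
    have : d - a ≠ 0 := by simp at ha; omega
    rw [zero_pow this, mul_zero, smul_zero]
  · intro h
    exact absurd (Finset.mem_range.mpr (by omega)) h

end

noncomputable section
open MvPolynomial

lemma cf_eq (d k : ℕ) (F : P2) (hk : k ≤ d) :
    coeff (Finsupp.single 0 (d - k) + Finsupp.single 1 k) F = cf d F (d - k) := by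
  rw [cf, show d - (d - k) = k by omega]

lemma R1 {d : ℕ} {F : P2} (hGood : F ∈ Submodule.span ℝ (GoodSet d)) (k : ℕ) (hk : k ≤ d) :
    cf d F k = - cf d F (d - k) := by
  have hs := swp_good hGood
  have hrep := rep_hom (good_homog hGood)
  have hco := congrArg (coeff (Finsupp.single 0 (d - k) + Finsupp.single 1 k)) hs
  rw [coeff_neg, cf_eq d k F hk] at hco
  have hL : coeff (Finsupp.single 0 (d - k) + Finsupp.single 1 k)
      (swph (∑ a ∈ Finset.range (d+1), cf d F a • MM d a)) = cf d F k := by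
    show coeff _ (sub2 (X 1) (X 0) _) = _
    rw [show (∑ a ∈ Finset.range (d+1), cf d F a • MM d a) = Fsum d (cf d F) from rfl,
      sub2_Fsum, MvPolynomial.coeff_sum, Finset.sum_eq_single k]
    · rw [coeff_smul, mul_comm ((X 1 : P2)^k), coeff_XY, if_pos ⟨rfl, rfl⟩, smul_eq_mul, mul_one]
    · intro a _ ha
      rw [coeff_smul, mul_comm ((X 1 : P2)^a), coeff_XY, if_neg, smul_eq_mul, mul_zero]
      rintro ⟨-, rfl⟩; exact ha rfl
    · intro hmem
      exact absurd (Finset.mem_range.mpr (by omega)) hmem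
  rw [← hrep] at hL
  rw [← hL]
  exact hco

lemma binom (n : ℕ) : (-X 0 - X 1 : P2)^n
    = ∑ i ∈ Finset.range (n+1), C ((-1:ℝ)^n * (Nat.choose n i : ℝ)) * (X 0^i * X 1^(n-i)) := by
  rw [show (-X 0 - X 1 : P2) = -(X 0 + X 1) by ring, neg_pow, add_pow, Finset.mul_sum]
  refine Finset.sum_congr rfl (fun i _ => ?_)
  rw [map_mul, map_pow, map_neg, map_one, map_natCast (C : ℝ →+* P2)]
  ring

lemma coeff_X1_negpow (a n x y : ℕ) :
    coeff (Finsupp.single 0 x + Finsupp.single 1 y) ((X 1:P2)^a * (-X 0 - X 1)^n)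
      = (-1:ℝ)^n * (Nat.choose n x : ℝ) * (if x ≤ n ∧ a + (n - x) = y then 1 else 0) := by
  rw [binom, Finset.mul_sum]
  have hterm : ∀ i, (X 1:P2)^a * (C ((-1:ℝ)^n * (Nat.choose n i : ℝ)) * (X 0^i * X 1^(n-i)))
      = C ((-1:ℝ)^n * (Nat.choose n i : ℝ)) * (X 0^i * X 1^(a + (n-i))) := by
    intro i
    rw [pow_add]
    ring
  simp only [hterm]
  rw [MvPolynomial.coeff_sum]
  by_cases hx : x ≤ n
  · rw [Finset.sum_eq_single x]
    · rw [coeff_C_mul, coeff_XY]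
      by_cases hy : a + (n - x) = y
      · rw [if_pos ⟨rfl, hy⟩, if_pos ⟨hx, hy⟩]
      · rw [if_neg (by tauto), if_neg (by tauto)] <;> simp
    · intro i _ hi
      rw [coeff_C_mul, coeff_XY, if_neg, mul_zero]
      rintro ⟨rfl, -⟩; exact hi rfl
    · intro hmem
      exact absurd (Finset.mem_range.mpr (by omega)) hmem
  · rw [Finset.sum_eq_zero, Nat.choose_eq_zero_of_lt (by omega), Nat.cast_zero, mul_zero,
      zero_mul]
    intro i hi
    rw [coeff_C_mul, coeff_XY, if_neg, mul_zero]
    rintro ⟨rfl, -⟩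
    simp at hi; omega

lemma R2 {d : ℕ} {F : P2} (hGood : F ∈ Submodule.span ℝ (GoodSet d)) (k : ℕ) (hk : k ≤ d) :
    ∑ a ∈ Finset.range (d+1), (-1:ℝ)^(d-a) * (Nat.choose (d-a) (d-k) : ℝ) * cf d F a
      = cf d F (d - k) := by
  have hs := sg_good hGood
  have hrep := rep_hom (good_homog hGood)
  have hco := congrArg (coeff (Finsupp.single 0 (d - k) + Finsupp.single 1 k)) hs
  rw [cf_eq d k F hk] at hco
  have hL : coeff (Finsupp.single 0 (d - k) + Finsupp.single 1 k)
      (sgh (∑ a ∈ Finset.range (d+1), cf d F a • MM d a))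
      = ∑ a ∈ Finset.range (d+1), (-1:ℝ)^(d-a) * (Nat.choose (d-a) (d-k) : ℝ) * cf d F a := by
    show coeff _ (sub2 (X 1) (-X 0 - X 1) _) = _
    rw [show (∑ a ∈ Finset.range (d+1), cf d F a • MM d a) = Fsum d (cf d F) from rfl,
      sub2_Fsum, MvPolynomial.coeff_sum]
    refine Finset.sum_congr rfl (fun a ha => ?_)
    rw [coeff_smul, coeff_X1_negpow, smul_eq_mul]
    have had : a ≤ d := by simp at ha; omega
    by_cases hak : a ≤ k
    · rw [if_pos ⟨by omega, by omega⟩, mul_one]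
      ring
    · rw [if_neg (by omega), Nat.choose_eq_zero_of_lt (by omega), Nat.cast_zero]
      ring
  rw [← hrep] at hL
  rw [← hL]
  exact hco

lemma MM_mul (d a b : ℕ) : MM d a * MM d b = X 0^(a+b) * X 1^((d-a)+(d-b)) := by
  rw [MM, MM, pow_add, pow_add]; ring

lemma coeff_FF (d x : ℕ) (α β : ℕ → ℝ) :
    coeff (Finsupp.single 0 x + Finsupp.single 1 (2*d - x)) (Fsum d α * Fsum d β)
      = ∑ a ∈ Finset.range (d+1), ∑ b ∈ Finset.range (d+1),
          (if a + b = x then α a * β b else 0) := by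
  rw [Fsum, Fsum, Finset.sum_mul_sum, MvPolynomial.coeff_sum]
  refine Finset.sum_congr rfl (fun a ha => ?_)
  rw [MvPolynomial.coeff_sum]
  refine Finset.sum_congr rfl (fun b hb => ?_)
  rw [smul_mul_smul_comm, coeff_smul, MM_mul, coeff_XY, smul_eq_mul]
  have had : a ≤ d := by simp at ha; omega
  have hbd : b ≤ d := by simp at hb; omega
  by_cases h : a + b = x
  · rw [if_pos ⟨h, by omega⟩, if_pos h, mul_one]
  · rw [if_neg (by tauto), if_neg h, mul_zero]

end

noncomputable section
open MvPolynomial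

lemma gate_sum_eq (d x : ℕ) (t u : ℕ → ℕ → ℝ)
    (h : ∀ a b, a ≤ d → b ≤ d → a + b = x → t a b = u a b) :
    (∑ a ∈ Finset.range (d+1), ∑ b ∈ Finset.range (d+1), if a + b = x then t a b else 0)
      = ∑ a ∈ Finset.range (d+1), ∑ b ∈ Finset.range (d+1), if a + b = x then u a b else 0 := by
  refine Finset.sum_congr rfl (fun a ha => Finset.sum_congr rfl (fun b hb => ?_))
  simp only [Finset.mem_range] at ha hb
  split_ifs with hab
  · exact h a b (by omega) (by omega) hab
  · rfl

lemma gate_sum_const (d x : ℕ) (s : ℝ) (u : ℕ → ℕ → ℝ) :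
    (∑ a ∈ Finset.range (d+1), ∑ b ∈ Finset.range (d+1), if a + b = x then s * u a b else 0)
      = s * ∑ a ∈ Finset.range (d+1), ∑ b ∈ Finset.range (d+1),
          if a + b = x then u a b else 0 := by
  rw [Finset.mul_sum]
  refine Finset.sum_congr rfl (fun a _ => ?_)
  rw [Finset.mul_sum]
  refine Finset.sum_congr rfl (fun b _ => ?_)
  rw [mul_ite, mul_zero]

lemma R3 {d : ℕ} {F : P2} (hGood : F ∈ Submodule.span ℝ (GoodSet d))
    (hPP0 : PP F F = 0) (x : ℕ) (hx : x % 2 = 1) (hxd : x ≠ d) :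
    ∑ a ∈ Finset.range (d+1), ∑ b ∈ Finset.range (d+1),
      (if a + b = x then cf d F a * cf d F b else 0) = 0 := by
  set c : ℕ → ℝ := cf d F with hc
  have hrepF : F = Fsum d c := rep_hom (good_homog hGood)
  have hsg := sg_good hGood
  have hswp := swp_good hGood
  have h6 : sub2 (X 0) (X 1) F * sub2 (-X 0) (-X 1) F
      - sub2 (X 0) (-X 0) F * sub2 (X 1) (-X 1) F
      + sub2 (X 0) (-X 1) F * sub2 (X 1) (-X 0) F
      + sub2 (X 1) (-X 0) F * sub2 (X 0) (-X 1) F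
      - sub2 (X 1) (-X 1) F * sub2 (X 0) (-X 0) F
      + sub2 (-X 0) (-X 1) F * sub2 (X 0) (X 1) F = 0 := by
    have h := congrArg rho hPP0
    rw [PP] at h
    simpa only [map_add, map_sub, map_mul, map_zero, rho_sub3, rho_X0, rho_X1, rho_X2,
      rho_W4] using h
  have hD1 : sub2 (X 0) (-X 0) F = c d • (-X 0 : P2)^d := by
    conv_lhs => rw [← hsg]
    rw [sgh, sub2_comp]
    have e1 : sub2 (X 0) (-X 0) (X 1) = -X 0 := by simp [sub2]
    have e2 : sub2 (X 0) (-X 0) (-X 0 - X 1) = 0 := by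
      rw [map_sub, map_neg]; simp [sub2]
    rw [e1, e2, hrepF, V3]
  have hD2 : sub2 (X 1) (-X 1) F = c d • (-X 1 : P2)^d := by
    conv_lhs => rw [← hsg]
    rw [sgh, sub2_comp]
    have e1 : sub2 (X 1) (-X 1) (X 1) = -X 1 := by simp [sub2]
    have e2 : sub2 (X 1) (-X 1) (-X 0 - X 1) = 0 := by
      rw [map_sub, map_neg]; simp [sub2]
    rw [e1, e2, hrepF, V3]
  have hA6 : sub2 (X 1) (-X 0) F = - sub2 (-X 0) (X 1) F := by
    have hF : F = - swph F := by rw [hswp, neg_neg]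
    conv_lhs => rw [hF]
    rw [map_neg, swph, sub2_comp]
    have e1 : sub2 (X 1) (-X 0) (X 1) = -X 0 := by simp [sub2]
    have e2 : sub2 (X 1) (-X 0) (X 0) = X 1 := by simp [sub2]
    rw [e1, e2]
  rw [hD1, hD2, hA6] at h6
  rw [hrepF] at h6
  rw [V1, V2, V4, V5] at h6
  have hco := congrArg (coeff (Finsupp.single 0 x + Finsupp.single 1 (2*d - x))) h6
  have hcross : coeff (Finsupp.single 0 x + Finsupp.single 1 (2*d - x))
      ((c d • (-X 0 : P2)^d) * (c d • (-X 1 : P2)^d)) = 0 := by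
    rw [smul_mul_smul_comm, coeff_smul, neg_pow (X 0 : P2) d, neg_pow (X 1 : P2) d,
      mul_mul_mul_comm, ← pow_add, Even.neg_one_pow ⟨d, rfl⟩, one_mul, coeff_XY, if_neg,
      smul_eq_mul, mul_zero]
    rintro ⟨h1, -⟩; exact hxd h1.symm
  have hcross2 : coeff (Finsupp.single 0 x + Finsupp.single 1 (2*d - x))
      ((c d • (-X 1 : P2)^d) * (c d • (-X 0 : P2)^d)) = 0 := by
    rw [mul_comm (c d • (-X 1 : P2)^d)]; exact hcross
  rw [mul_neg, neg_mul] at hco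
  simp only [coeff_add, coeff_sub, coeff_neg, MvPolynomial.coeff_zero] at hco
  rw [coeff_FF, coeff_FF, coeff_FF, coeff_FF, hcross, hcross2] at hco
  -- now convert the four double sums
  have e1 : (∑ a ∈ Finset.range (d+1), ∑ b ∈ Finset.range (d+1),
      if a + b = x then c a * ((-1:ℝ)^d * c b) else 0)
      = (-1:ℝ)^d * ∑ a ∈ Finset.range (d+1), ∑ b ∈ Finset.range (d+1),
          if a + b = x then c a * c b else 0 := by
    rw [← gate_sum_const]
    exact gate_sum_eq d x _ _ (fun a b _ _ _ => by ring)
  have e6 : (∑ a ∈ Finset.range (d+1), ∑ b ∈ Finset.range (d+1),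
      if a + b = x then ((-1:ℝ)^d * c a) * c b else 0)
      = (-1:ℝ)^d * ∑ a ∈ Finset.range (d+1), ∑ b ∈ Finset.range (d+1),
          if a + b = x then c a * c b else 0 := by
    rw [← gate_sum_const]
    exact gate_sum_eq d x _ _ (fun a b _ _ _ => by ring)
  have e3 : (∑ a ∈ Finset.range (d+1), ∑ b ∈ Finset.range (d+1),
      if a + b = x then ((-1:ℝ)^(d-a) * c a) * ((-1:ℝ)^b * c b) else 0)
      = (-(-1:ℝ)^d) * ∑ a ∈ Finset.range (d+1), ∑ b ∈ Finset.range (d+1),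
          if a + b = x then c a * c b else 0 := by
    rw [← gate_sum_const]
    refine gate_sum_eq d x _ _ (fun a b had hbd hab => ?_)
    have hsgn : (-1:ℝ)^(d-a) * (-1)^b = -(-1:ℝ)^d := by
      rw [← pow_add, npow_congr (d - a + b) (d + 1) (by omega), pow_succ]
      ring
    calc ((-1:ℝ)^(d-a) * c a) * ((-1:ℝ)^b * c b)
        = ((-1:ℝ)^(d-a) * (-1)^b) * (c a * c b) := by ring
      _ = -(-1:ℝ)^d * (c a * c b) := by rw [hsgn]
  have e4 : (∑ a ∈ Finset.range (d+1), ∑ b ∈ Finset.range (d+1),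
      if a + b = x then ((-1:ℝ)^a * c a) * ((-1:ℝ)^(d-b) * c b) else 0)
      = (-(-1:ℝ)^d) * ∑ a ∈ Finset.range (d+1), ∑ b ∈ Finset.range (d+1),
          if a + b = x then c a * c b else 0 := by
    rw [← gate_sum_const]
    refine gate_sum_eq d x _ _ (fun a b had hbd hab => ?_)
    have hsgn : (-1:ℝ)^a * (-1)^(d-b) = -(-1:ℝ)^d := by
      rw [← pow_add, npow_congr (a + (d - b)) (d + 1) (by omega), pow_succ]
      ring
    calc ((-1:ℝ)^a * c a) * ((-1:ℝ)^(d-b) * c b)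
        = ((-1:ℝ)^a * (-1)^(d-b)) * (c a * c b) := by ring
      _ = -(-1:ℝ)^d * (c a * c b) := by rw [hsgn]
  rw [e1, e6, e3, e4] at hco
  set S := ∑ a ∈ Finset.range (d+1), ∑ b ∈ Finset.range (d+1),
      if a + b = x then c a * c b else 0 with hS
  rcases Nat.even_or_odd d with hd | hd
  · rw [hd.neg_one_pow] at hco
    linarith
  · rw [hd.neg_one_pow] at hco
    linarith

end

noncomputable section
open MvPolynomial

lemma double_point (d p q : ℕ) (hp : p ≤ d) (hq : q ≤ d) (v : ℝ) :
    (∑ a ∈ Finset.range (d+1), ∑ b ∈ Finset.range (d+1),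
      if a = p ∧ b = q then v else 0) = v := by
  rw [Finset.sum_eq_single p]
  · rw [Finset.sum_eq_single q]
    · rw [if_pos ⟨rfl, rfl⟩]
    · intro b _ hb; rw [if_neg (fun h => hb h.2)]
    · intro h; exact absurd (Finset.mem_range.mpr (by omega)) h
  · intro a _ ha
    exact Finset.sum_eq_zero (fun b _ => if_neg (fun h => ha h.1))
  · intro h; exact absurd (Finset.mem_range.mpr (by omega)) h

lemma endgame {d : ℕ} {F : P2} (hGood : F ∈ Submodule.span ℝ (GoodSet d))
    (hPP0 : PP F F = 0) : F = 0 := by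
  have hrep := rep_hom (good_homog hGood)
  by_cases hC : ∀ a ∈ Finset.range (d+1), cf d F a = 0
  · rw [hrep]
    exact Finset.sum_eq_zero (fun a ha => by rw [hC a ha, zero_smul])
  exfalso
  push_neg at hC
  obtain ⟨a0, ha0r, ha0⟩ := hC
  set c : ℕ → ℝ := cf d F with hcdef
  set S : Finset ℕ := (Finset.range (d+1)).filter (fun a => c a ≠ 0) with hSdef
  have hmemS : ∀ a, a ∈ S ↔ (a ≤ d ∧ c a ≠ 0) := by
    intro a
    rw [hSdef, Finset.mem_filter, Finset.mem_range]
    constructor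
    · rintro ⟨h1, h2⟩; exact ⟨by omega, h2⟩
    · rintro ⟨h1, h2⟩; exact ⟨by omega, h2⟩
  have hSne : S.Nonempty := ⟨a0, (hmemS a0).mpr ⟨by simp at ha0r; omega, ha0⟩⟩
  set m0 := S.min' hSne with hm0def
  have hm0S : m0 ∈ S := S.min'_mem hSne
  have hm0d : m0 ≤ d := ((hmemS m0).mp hm0S).1
  have hcm0 : c m0 ≠ 0 := ((hmemS m0).mp hm0S).2
  have hmin : ∀ a, a ≤ d → c a ≠ 0 → m0 ≤ a := fun a h1 h2 => S.min'_le a ((hmemS a).mpr ⟨h1, h2⟩)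
  have hlow : ∀ a, a ≤ d → a < m0 → c a = 0 := by
    intro a h1 h2
    by_contra hne
    exact absurd (hmin a h1 hne) (by omega)
  -- R1 consequences
  have hR1 : ∀ k, k ≤ d → c k = - c (d - k) := fun k hk => R1 hGood k hk
  have hdm0 : c (d - m0) ≠ 0 := by
    have := hR1 m0 hm0d
    intro h; rw [h] at this; simp at this; exact hcm0 this
  have hne0 : m0 ≠ d - m0 := by
    intro h
    have := hR1 m0 hm0d
    rw [← h] at this
    have : c m0 = 0 := by linarith
    exact hcm0 this
  have h2m : 2 * m0 < d := by
    have := hmin (d - m0) (by omega) hdm0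
    omega
  -- E1 : collapse R2 at k = m0
  have hE1 : (-1:ℝ)^(d-m0) * c m0 = c (d - m0) := by
    have h := R2 hGood m0 hm0d
    rw [← hcdef] at h
    rw [Finset.sum_eq_single m0] at h
    · rw [Nat.choose_self, Nat.cast_one, mul_one] at h
      exact h
    · intro a har hane
      simp only [Finset.mem_range] at har
      rcases Nat.lt_or_ge a m0 with hlt | hge
      · rw [hlow a (by omega) hlt, mul_zero]
      · rw [Nat.choose_eq_zero_of_lt (by omega), Nat.cast_zero, mul_zero, zero_mul]
    · intro h; exact absurd (Finset.mem_range.mpr (by omega)) h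
  have hodd : (d - m0) % 2 = 1 := by
    rcases Nat.even_or_odd (d - m0) with he | ho
    · exfalso
      rw [he.neg_one_pow, one_mul] at hE1
      have h2 := hR1 m0 hm0d
      rw [hE1] at h2
      have : c (d - m0) = 0 := by linarith
      exact hdm0 this
    · exact Nat.odd_iff.mp ho
  -- ME : collapse R2 at k = m0 + 1
  have hME : -((d - m0 : ℕ) : ℝ) * c m0 + c (m0 + 1) = c (d - m0 - 1) := by
    have h := R2 hGood (m0 + 1) (by omega)
    rw [← hcdef] at h
    have hsub : ({m0, m0 + 1} : Finset ℕ) ⊆ Finset.range (d + 1) := by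
      intro a ha
      simp only [Finset.mem_insert, Finset.mem_singleton] at ha
      rcases ha with rfl | rfl <;> exact Finset.mem_range.mpr (by omega)
    rw [← Finset.sum_subset hsub] at h
    · rw [Finset.sum_pair (by omega : m0 ≠ m0 + 1)] at h
      rw [show d - (m0 + 1) = d - m0 - 1 by omega] at h
      have hch1 : (d - m0).choose (d - m0 - 1) = d - m0 := by
        have h1 : (1 : ℕ) ≤ d - m0 := by omega
        rw [Nat.choose_symm h1, Nat.choose_one_right]
      have hch2 : (d - m0 - 1).choose (d - m0 - 1) = 1 := Nat.choose_self _
      rw [hch1, hch2, Nat.cast_one] at h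
      have hs1 : (-1:ℝ)^(d - m0) = -1 := by
        rw [npow_mod, hodd, pow_one]
      have hs2 : (-1:ℝ)^(d - m0 - 1) = 1 := by
        rw [npow_mod, show (d - m0 - 1) % 2 = 0 by omega, pow_zero]
      rw [hs1, hs2] at h
      linarith
    · intro a har hans
      simp only [Finset.mem_insert, Finset.mem_singleton, not_or] at hans
      simp only [Finset.mem_range] at har
      rcases Nat.lt_or_ge a m0 with hlt | hge
      · rw [hlow a (by omega) hlt, mul_zero]
      · rw [Nat.choose_eq_zero_of_lt (by omega), Nat.cast_zero, mul_zero, zero_mul]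
  by_cases hcaseA : ∀ a, a ∈ S → a % 2 = m0 % 2
  · -- Case A : single parity
    have hc1 : c (m0 + 1) = 0 := by
      by_contra hne
      have hmem : m0 + 1 ∈ S := (hmemS _).mpr ⟨by omega, hne⟩
      have := hcaseA _ hmem
      omega
    have hc2 : c (d - m0 - 1) = 0 := by
      by_contra hne
      have hmem : d - m0 - 1 ∈ S := (hmemS _).mpr ⟨by omega, hne⟩
      have hp1 := hcaseA _ hmem
      have hp2 := hcaseA _ ((hmemS _).mpr ⟨by omega, hdm0⟩)
      omega
    rw [hc1, hc2, add_zero] at hME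
    have hcast : ((d - m0 : ℕ) : ℝ) ≠ 0 := by
      rw [Nat.cast_ne_zero]; omega
    have : c m0 = 0 := by
      rcases mul_eq_zero.mp (by linarith : ((d - m0 : ℕ) : ℝ) * c m0 = 0) with h | h
      · exact absurd h hcast
      · exact h
    exact hcm0 this
  · -- Case B : both parities appear
    push_neg at hcaseA
    obtain ⟨b0, hb0S, hb0p⟩ := hcaseA
    set S1 : Finset ℕ := S.filter (fun a => a % 2 ≠ m0 % 2) with hS1def
    have hS1ne : S1.Nonempty := ⟨b0, Finset.mem_filter.mpr ⟨hb0S, hb0p⟩⟩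
    set m1 := S1.min' hS1ne with hm1def
    have hm1S1 : m1 ∈ S1 := S1.min'_mem hS1ne
    have hm1S : m1 ∈ S := (Finset.mem_filter.mp hm1S1).1
    have hm1p : m1 % 2 ≠ m0 % 2 := (Finset.mem_filter.mp hm1S1).2
    have hm1d : m1 ≤ d := ((hmemS m1).mp hm1S).1
    have hcm1 : c m1 ≠ 0 := ((hmemS m1).mp hm1S).2
    have hmin1 : ∀ a, a ≤ d → c a ≠ 0 → a % 2 ≠ m0 % 2 → m1 ≤ a := by
      intro a h1 h2 h3
      exact S1.min'_le a (Finset.mem_filter.mpr ⟨(hmemS a).mpr ⟨h1, h2⟩, h3⟩)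
    have hm0m1 : m0 ≠ m1 := by omega
    by_cases hxd : m0 + m1 = d
    · -- x = d : S = {m0, d - m0}
      have hm1val : m1 = d - m0 := by omega
      have hdodd : d % 2 = 1 := by omega
      have hm0even : m0 % 2 = 0 := by omega
      have hpar : ∀ a, a ∈ S → a % 2 = m0 % 2 → a = m0 := by
        intro a haS hp
        have had : a ≤ d := ((hmemS a).mp haS).1
        have hca : c a ≠ 0 := ((hmemS a).mp haS).2
        have hda : c (d - a) ≠ 0 := by
          have := hR1 a had
          intro h; rw [h] at this; simp at this; exact hca this
        have : m1 ≤ d - a := hmin1 (d - a) (by omega) hda (by omega)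
        have : m0 ≤ a := hmin a had hca
        omega
      have hSstruct : ∀ a, a ∈ S → a = m0 ∨ a = d - m0 := by
        intro a haS
        have had : a ≤ d := ((hmemS a).mp haS).1
        have hca : c a ≠ 0 := ((hmemS a).mp haS).2
        by_cases hp : a % 2 = m0 % 2
        · exact Or.inl (hpar a haS hp)
        · right
          have hda : c (d - a) ≠ 0 := by
            have := hR1 a had
            intro h; rw [h] at this; simp at this; exact hca this
          have hdaS : d - a ∈ S := (hmemS _).mpr ⟨by omega, hda⟩
          have := hpar (d - a) hdaS (by omega)
          omega
      by_cases hbr : m0 + 1 = d - m0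
      · -- branch ii
        have hc1 : c (m0 + 1) = - c m0 := by
          rw [hbr]
          have := hR1 m0 hm0d
          linarith
        have hc2 : c (d - m0 - 1) = c m0 := by
          rw [show d - m0 - 1 = m0 by omega]
        rw [hc1, hc2] at hME
        have hcast : (0:ℝ) < ((d - m0 : ℕ) : ℝ) + 2 := by positivity
        have : c m0 = 0 := by
          have h0 : (((d - m0 : ℕ) : ℝ) + 2) * c m0 = 0 := by linarith
          rcases mul_eq_zero.mp h0 with h | h
          · linarith
          · exact h
        exact hcm0 this
      · -- branch i
        have hc1 : c (m0 + 1) = 0 := by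
          by_contra hne
          have hmem : m0 + 1 ∈ S := (hmemS _).mpr ⟨by omega, hne⟩
          rcases hSstruct _ hmem with h | h <;> omega
        have hc2 : c (d - m0 - 1) = 0 := by
          by_contra hne
          have hmem : d - m0 - 1 ∈ S := (hmemS _).mpr ⟨by omega, hne⟩
          rcases hSstruct _ hmem with h | h <;> omega
        rw [hc1, hc2, add_zero] at hME
        have hcast : ((d - m0 : ℕ) : ℝ) ≠ 0 := by
          rw [Nat.cast_ne_zero]; omega
        have : c m0 = 0 := by
          rcases mul_eq_zero.mp (by linarith : ((d - m0 : ℕ) : ℝ) * c m0 = 0) with h | h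
          · exact absurd h hcast
          · exact h
        exact hcm0 this
    · -- x ≠ d : use R3
      have hR3 := R3 hGood hPP0 (m0 + m1) (by omega) hxd
      rw [← hcdef] at hR3
      have hkey : ∀ a ∈ Finset.range (d+1), ∀ b ∈ Finset.range (d+1),
          (if a + b = m0 + m1 then c a * c b else 0)
            = (if a = m0 ∧ b = m1 then c m0 * c m1 else 0)
              + (if a = m1 ∧ b = m0 then c m1 * c m0 else 0) := by
        intro a har b hbr
        simp only [Finset.mem_range] at har hbr
        by_cases hab : a + b = m0 + m1
        · rw [if_pos hab]
          by_cases hca : c a = 0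
          · rw [if_neg (by rintro ⟨rfl, -⟩; exact hcm0 hca),
              if_neg (by rintro ⟨rfl, -⟩; exact hcm1 hca), hca, zero_mul, add_zero]
          · by_cases hcb : c b = 0
            · rw [if_neg (by rintro ⟨-, rfl⟩; exact hcm1 hcb),
                if_neg (by rintro ⟨-, rfl⟩; exact hcm0 hcb), hcb, mul_zero, add_zero]
            · have ham0 : m0 ≤ a := hmin a (by omega) hca
              have hbm0 : m0 ≤ b := hmin b (by omega) hcb
              by_cases hap : a % 2 = m0 % 2
              · have hbp : b % 2 ≠ m0 % 2 := by omega
                have hbm1 : m1 ≤ b := hmin1 b (by omega) hcb hbp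
                have haeq : a = m0 := by omega
                have hbeq : b = m1 := by omega
                subst haeq; subst hbeq
                rw [if_pos ⟨rfl, rfl⟩, if_neg (by rintro ⟨h1, -⟩; exact hm0m1 h1), add_zero]
              · have ham1 : m1 ≤ a := hmin1 a (by omega) hca hap
                have haeq : a = m1 := by omega
                have hbeq : b = m0 := by omega
                subst haeq; subst hbeq
                rw [if_neg (by rintro ⟨-, h2⟩; exact hm0m1 h2), if_pos ⟨rfl, rfl⟩, zero_add,
                  mul_comm]
        · rw [if_neg hab, if_neg (by rintro ⟨rfl, rfl⟩; exact hab rfl),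
            if_neg (by rintro ⟨rfl, rfl⟩; omega), add_zero]
      rw [Finset.sum_congr rfl (fun a ha => Finset.sum_congr rfl (fun b hb => hkey a ha b hb))]
        at hR3
      simp only [Finset.sum_add_distrib] at hR3
      rw [double_point d m0 m1 hm0d hm1d, double_point d m1 m0 hm1d hm0d] at hR3
      have : c m0 * c m1 = 0 := by
        rw [mul_comm (c m1) (c m0)] at hR3
        linarith
      rcases mul_eq_zero.mp this with h | h
      · exact hcm0 h
      · exact hcm1 h

end

/-- `IsVarDer D pd χ v` asserts that `v` is the variational derivative
`δχ/δθ = Σ_{s≥0} (−1)^s ∂^s (∂χ/∂θ^s)` (a finite sum on each element). -/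
def IsVarDer (D : Module.End ℝ (ExteriorAlgebra ℝ (ℕ →₀ ℝ)))
    (pd : ℕ → Module.End ℝ (ExteriorAlgebra ℝ (ℕ →₀ ℝ)))
    (χ v : ExteriorAlgebra ℝ (ℕ →₀ ℝ)) : Prop :=
  ∃ N : ℕ, (∀ s, N ≤ s → pd s χ = 0) ∧
    v = ∑ s ∈ Finset.range N, ((-1 : ℝ) ^ s) • ((D ^ s) (pd s χ))

/-- if `χ ∈ Θ^3_d` and `(δχ/δθ)²` lies in `∂(Θ^4_{2d−1})`, then `δχ/δθ = 0`. -/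
theorem stmt11 (D : Module.End ℝ (ExteriorAlgebra ℝ (ℕ →₀ ℝ)))
    (hder : ∀ a b, D (a * b) = D a * b + a * D b)
    (hθ : ∀ i, D (θg i) = θg (i + 1))
    (pd : ℕ → Module.End ℝ (ExteriorAlgebra ℝ (ℕ →₀ ℝ)))
    (hpd1 : ∀ s, pd s 1 = 0)
    (hpdθ : ∀ s t x, pd s (θg t * x) = (if s = t then x else 0) - θg t * pd s x)
    (d : ℕ) (χ : ExteriorAlgebra ℝ (ℕ →₀ ℝ)) (hχ : χ ∈ ThSpace 3 d)
    (v : ExteriorAlgebra ℝ (ℕ →₀ ℝ)) (hv : IsVarDer D pd χ v)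
    (h : v * v ∈ Submodule.map D (ThSpace 4 (2 * d - 1))) :
    v = 0 := by
  obtain ⟨N, hN0, hNeq⟩ := hv
  obtain ⟨M₀, hM₀, w, F, hwspan, hPsiw, hFGood, hwsum⟩ :=
    struct D pd hder hθ hpd1 hpdθ d χ hχ
  have hvw : v = w := by
    rw [hNeq, ← hwsum (max N M₀) (le_max_right _ _)]
    apply Finset.sum_subset (Finset.range_subset_range.mpr (le_max_left _ _))
    intro s _ hs
    rw [hN0 s (by simp at hs ⊢; omega), map_zero, smul_zero]
  -- the square is killed by Psi4
  obtain ⟨u, hu, huD⟩ := h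
  have hzero : Psi4 (v * v) = 0 := by
    rw [← huD]
    exact Psi4_D_ThSpace D hder hθ _ hu
  have hPP0 : PP F F = 0 := by
    rw [← hPsiw, ← Psi4_mul w w hwspan hwspan, ← hvw, hzero]
  have hF0 : F = 0 := endgame hFGood hPP0
  have h2v : (2:ℝ) • v = 0 := by
    rw [show (2:ℝ) • v = Ξ (Psi2 v) from (Xi_Psi2 (hvw ▸ hwspan)).symm, hvw, hPsiw, hF0, map_zero]
  have := smul_eq_zero.mp h2v
  rcases this with h | h
  · norm_num at h
  · exact h
end
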